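/- arXiv:1507.07059 — 5 statements merged into one kernel-verified Lean document; each statement's English description precedes it below -/
import Mathlib

section
/- Let G be a finite simple connected graph on n ≥ 2 vertices v_1,…,v_n with distance spectral radius ρ^D(G). Then min_{1≤i,j≤n} sqrt(T_i T_j/(D_i D_j)) ≤ ρ^D(G) ≤ max_{1≤i,j≤n} sqrt(T_i T_j/(D_i D_j)), and equality holds in either bound if and only if T_1/D_1 = T_2/D_2 = … = T_n/D_n. -/
open Matrix

/-- The spectral radius of a real square matrix: the largest modulus of its
complex eigenvalues. -/
noncomputable def specRad {n : ℕ} (M : Matrix (Fin n) (Fin n) ℝ) : ℝ :=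
  sSup {x : ℝ | ∃ μ : ℂ, μ ∈ spectrum ℂ (M.map Complex.ofReal) ∧ x = ‖μ‖}

/-- A square matrix is irreducible if for every pair of indices `(i, j)` there is a
positive power `k` with `(A ^ k) i j > 0`. -/
def MatIrred {n : ℕ} (M : Matrix (Fin n) (Fin n) ℝ) : Prop :=
  ∀ i j, ∃ k : ℕ, 0 < k ∧ 0 < (M ^ k) i j

section Aux

open Finset

set_option linter.unusedSectionVars false

variable {n : ℕ} [NeZero n] {M : Matrix (Fin n) (Fin n) ℝ}

lemma spectrum_map_ofReal (hM : M.IsHermitian) :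
    spectrum ℂ (M.map Complex.ofReal) = Set.range (fun i => (hM.eigenvalues i : ℂ)) := by
  set V : Matrix (Fin n) (Fin n) ℝ := (hM.eigenvectorUnitary : Matrix (Fin n) (Fin n) ℝ) with hV
  have hstar : ∀ (A : Matrix (Fin n) (Fin n) ℝ),
      (star A).map Complex.ofReal = star (A.map Complex.ofReal) := by
    intro A
    simpa [Matrix.star_eq_conjTranspose] using
      (Matrix.conjTranspose_map (A := A) Complex.ofReal (fun x => by simp [Complex.conj_ofReal]))
  have hmul : ∀ (A B : Matrix (Fin n) (Fin n) ℝ), (A * B).map Complex.ofReal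
      = A.map Complex.ofReal * B.map Complex.ofReal := by
    intro A B
    exact map_mul ((algebraMap ℝ ℂ).mapMatrix) A B
  have hu : (V.map Complex.ofReal) ∈ unitary (Matrix (Fin n) (Fin n) ℂ) := by
    rw [Unitary.mem_iff]
    constructor
    · rw [← hstar, ← hmul]
      have : star V * V = 1 := Matrix.UnitaryGroup.star_mul_self hM.eigenvectorUnitary
      rw [this]
      simp
    · rw [← hstar, ← hmul]
      have : V * star V = 1 := by
        have := (Matrix.mem_unitaryGroup_iff).mp hM.eigenvectorUnitary.2
        exact this
      rw [this]
      simp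
  have hdec : M.map Complex.ofReal =
      (⟨V.map Complex.ofReal, hu⟩ : unitary (Matrix (Fin n) (Fin n) ℂ)) *
        Matrix.diagonal (fun i => (hM.eigenvalues i : ℂ)) *
        (star (⟨V.map Complex.ofReal, hu⟩ : unitary (Matrix (Fin n) (Fin n) ℂ)) :
          Matrix (Fin n) (Fin n) ℂ) := by
    conv_lhs => rw [hM.spectral_theorem, Unitary.conjStarAlgAut_apply]
    rw [hmul, hmul, hstar]
    congr 2
    rw [Matrix.diagonal_map (by simp)]
    rfl
  rw [hdec, ← Unitary.coe_star]
  exact Unitary.spectrum_star_right_conjugate.trans (spectrum_diagonal _)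

/-- The largest eigenvalue of a real symmetric matrix. -/
noncomputable def lmax (hM : M.IsHermitian) : ℝ :=
  Finset.univ.sup' (univ_nonempty) hM.eigenvalues

lemma psd_sub (hM : M.IsHermitian) :
    (lmax hM • (1 : Matrix (Fin n) (Fin n) ℝ) - M).PosSemidef := by
  set V := (hM.eigenvectorUnitary : Matrix (Fin n) (Fin n) ℝ) with hV
  have hdec : lmax hM • (1 : Matrix (Fin n) (Fin n) ℝ) - M
      = V * Matrix.diagonal (fun i => lmax hM - hM.eigenvalues i) * star V := by
    have hd : Matrix.diagonal (fun i => lmax hM - hM.eigenvalues i)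
        = lmax hM • (1 : Matrix (Fin n) (Fin n) ℝ)
          - Matrix.diagonal (RCLike.ofReal ∘ hM.eigenvalues) := by
      rw [Matrix.smul_one_eq_diagonal, ← Matrix.diagonal_sub]
      congr 1
    have hsp : M = V * Matrix.diagonal (RCLike.ofReal ∘ hM.eigenvalues) * star V := by
      conv_lhs => rw [hM.spectral_theorem, Unitary.conjStarAlgAut_apply]
    rw [hd, Matrix.mul_sub, Matrix.sub_mul, ← hsp]
    congr 1
    rw [Matrix.mul_smul, Matrix.smul_mul, mul_one]
    have h2 : V * star V = 1 := (Matrix.mem_unitaryGroup_iff).mp hM.eigenvectorUnitary.2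
    rw [h2]
  rw [hdec]
  exact Matrix.PosSemidef.mul_mul_conjTranspose_same
    (Matrix.PosSemidef.diagonal (fun i => sub_nonneg.2 (Finset.le_sup' _ (mem_univ i)))) V

lemma rayleigh_le (hM : M.IsHermitian) (x : Fin n → ℝ) :
    x ⬝ᵥ (M *ᵥ x) ≤ lmax hM * (x ⬝ᵥ x) := by
  have h := (psd_sub hM).dotProduct_mulVec_nonneg x
  simp only [star_trivial, Matrix.sub_mulVec, Matrix.smul_mulVec, Matrix.one_mulVec,
    dotProduct_sub, dotProduct_smul, smul_eq_mul] at h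
  linarith

lemma abs_le_dot (hnn : ∀ i j, 0 ≤ M i j) (x : Fin n → ℝ) :
    |x ⬝ᵥ (M *ᵥ x)| ≤ (fun i => |x i|) ⬝ᵥ (M *ᵥ (fun i => |x i|)) := by
  simp only [dotProduct, Matrix.mulVec, dotProduct]
  calc |∑ i, x i * ∑ j, M i j * x j| ≤ ∑ i, |x i * ∑ j, M i j * x j| := by
        exact Finset.abs_sum_le_sum_abs _ _
    _ ≤ ∑ i, |x i| * ∑ j, M i j * |x j| := by
        apply Finset.sum_le_sum
        intro i _
        rw [abs_mul]
        apply mul_le_mul_of_nonneg_left _ (abs_nonneg _)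
        calc |∑ j, M i j * x j| ≤ ∑ j, |M i j * x j| := Finset.abs_sum_le_sum_abs _ _
          _ = ∑ j, M i j * |x j| := by
              apply Finset.sum_congr rfl
              intro j _
              rw [abs_mul, abs_of_nonneg (hnn i j)]

lemma lmax_nonneg (hM : M.IsHermitian) (hnn : ∀ i j, 0 ≤ M i j) : 0 ≤ lmax hM := by
  have h := rayleigh_le hM (Pi.single (0 : Fin n) 1)
  have h0 : (Pi.single (0 : Fin n) 1 : Fin n → ℝ) ⬝ᵥ (M *ᵥ Pi.single 0 1) = M 0 0 := by
    simp [Matrix.mulVec_single, dotProduct, Pi.single_apply]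
  have h1 : (Pi.single (0 : Fin n) 1 : Fin n → ℝ) ⬝ᵥ (Pi.single 0 1) = 1 := by
    simp [dotProduct, Pi.single_apply]
  rw [h0, h1, mul_one] at h
  exact le_trans (hnn 0 0) h

lemma abs_eig_le (hM : M.IsHermitian) (hnn : ∀ i j, 0 ≤ M i j) (i : Fin n) :
    |hM.eigenvalues i| ≤ lmax hM := by
  set v : Fin n → ℝ := ⇑(hM.eigenvectorBasis i) with hv
  have hunit : v ⬝ᵥ v = 1 := by
    have hn := hM.eigenvectorBasis.orthonormal.1 i
    have h2 : (inner (𝕜 := ℝ) (hM.eigenvectorBasis i) (hM.eigenvectorBasis i)) = (1 : ℝ) := by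
      rw [real_inner_self_eq_norm_sq, hn]; norm_num
    rw [← h2, PiLp.inner_apply]
    simp only [RCLike.inner_apply, conj_trivial, dotProduct]
    exact Finset.sum_congr rfl fun j _ => rfl
  have heig : v ⬝ᵥ (M *ᵥ v) = hM.eigenvalues i := by
    rw [hv, hM.mulVec_eigenvectorBasis, ← hv]
    rw [dotProduct_smul, smul_eq_mul, hunit, mul_one]
  have habs := abs_le_dot hnn v
  rw [heig] at habs
  refine le_trans habs (le_trans (rayleigh_le hM _) ?_)
  have : (fun i => |v i|) ⬝ᵥ (fun i => |v i|) = 1 := by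
    rw [← hunit]; simp [dotProduct, abs_mul_abs_self]
  rw [this, mul_one]

lemma specRad_eq_lmax (hM : M.IsHermitian) (hnn : ∀ i j, 0 ≤ M i j) :
    specRad M = lmax hM := by
  have hspec := spectrum_map_ofReal hM
  have hset : {x : ℝ | ∃ μ : ℂ, μ ∈ spectrum ℂ (M.map Complex.ofReal) ∧ x = ‖μ‖}
      = Set.range (fun i => |hM.eigenvalues i|) := by
    ext x
    simp only [hspec, Set.mem_setOf_eq, Set.mem_range]
    constructor
    · rintro ⟨μ, ⟨i, rfl⟩, rfl⟩
      exact ⟨i, by simp⟩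
    · rintro ⟨i, rfl⟩
      exact ⟨_, ⟨i, rfl⟩, by simp⟩
  rw [specRad, hset]
  obtain ⟨i₀, -, hi₀⟩ := Finset.exists_mem_eq_sup' (univ_nonempty (α := Fin n)) hM.eigenvalues
  apply le_antisymm
  · apply csSup_le (Set.range_nonempty _)
    rintro x ⟨i, rfl⟩
    exact abs_eig_le hM hnn i
  · apply le_csSup
    · exact ⟨lmax hM, by rintro x ⟨i, rfl⟩; exact abs_eig_le hM hnn i⟩
    · refine ⟨i₀, ?_⟩
      have h0 : 0 ≤ hM.eigenvalues i₀ := hi₀ ▸ lmax_nonneg hM hnn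
      simp only []
      rw [abs_of_nonneg h0, lmax, hi₀]

lemma perron (hM : M.IsHermitian) (hnn : ∀ i j, 0 ≤ M i j)
    (hoff : ∀ i j, i ≠ j → 0 < M i j) :
    ∃ u : Fin n → ℝ, (∀ i, 0 < u i) ∧ M *ᵥ u = lmax hM • u := by
  obtain ⟨i₀, -, hi₀⟩ := Finset.exists_mem_eq_sup' (univ_nonempty (α := Fin n)) hM.eigenvalues
  set v : Fin n → ℝ := ⇑(hM.eigenvectorBasis i₀) with hv
  have hunit : v ⬝ᵥ v = 1 := by
    have hnorm := hM.eigenvectorBasis.orthonormal.1 i₀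
    have h2 : (inner (𝕜 := ℝ) (hM.eigenvectorBasis i₀) (hM.eigenvectorBasis i₀)) = (1 : ℝ) := by
      rw [real_inner_self_eq_norm_sq, hnorm]; norm_num
    rw [← h2, PiLp.inner_apply]
    simp only [RCLike.inner_apply, conj_trivial, dotProduct]
    exact Finset.sum_congr rfl fun j _ => rfl
  have heig : v ⬝ᵥ (M *ᵥ v) = lmax hM := by
    rw [hv, hM.mulVec_eigenvectorBasis, ← hv, dotProduct_smul, smul_eq_mul, hunit, mul_one,
      lmax, hi₀]
  set u : Fin n → ℝ := fun i => |v i| with hu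
  have huu : u ⬝ᵥ u = 1 := by
    rw [← hunit]; simp [hu, dotProduct, abs_mul_abs_self]
  have hge : lmax hM ≤ u ⬝ᵥ (M *ᵥ u) := by
    rw [← heig]
    exact le_trans (le_abs_self _) (abs_le_dot hnn v)
  have hle : u ⬝ᵥ (M *ᵥ u) ≤ lmax hM := by
    have := rayleigh_le hM u
    rwa [huu, mul_one] at this
  have heq : u ⬝ᵥ (M *ᵥ u) = lmax hM := le_antisymm hle hge
  have hzero : (lmax hM • (1 : Matrix (Fin n) (Fin n) ℝ) - M) *ᵥ u = 0 := by
    rw [← (psd_sub hM).dotProduct_mulVec_zero_iff u]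
    simp only [star_trivial, Matrix.sub_mulVec, Matrix.smul_mulVec, Matrix.one_mulVec,
      dotProduct_sub, dotProduct_smul, smul_eq_mul]
    rw [huu, heq, mul_one, sub_self]
  have hev : M *ᵥ u = lmax hM • u := by
    rw [Matrix.sub_mulVec, sub_eq_zero, Matrix.smul_mulVec, Matrix.one_mulVec] at hzero
    exact hzero.symm
  refine ⟨u, ?_, hev⟩
  intro i
  rcases lt_or_eq_of_le (abs_nonneg (v i)) with h | h
  · exact h
  · exfalso
    have hzi : (M *ᵥ u) i = 0 := by
      have hui : u i = 0 := h.symm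
      rw [hev, Pi.smul_apply, smul_eq_mul, hui, mul_zero]
    have hall : ∀ j ∈ Finset.univ, M i j * u j = 0 := by
      rw [Matrix.mulVec, dotProduct] at hzi
      exact (Finset.sum_eq_zero_iff_of_nonneg
        (fun j _ => mul_nonneg (hnn i j) (abs_nonneg (v j)))).mp hzi
    have huz : ∀ j, u j = 0 := by
      intro j
      rcases eq_or_ne j i with rfl | hji
      · exact h.symm
      · have := hall j (Finset.mem_univ j)
        exact (mul_eq_zero.mp this).resolve_left (ne_of_gt (hoff i j (Ne.symm hji)))
    have : u ⬝ᵥ u = 0 := by simp [dotProduct, huz]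
    rw [huu] at this
    exact one_ne_zero this

end Aux

theorem stmt_11 {n : ℕ} (hn : 2 ≤ n) (G : SimpleGraph (Fin n)) (hG : G.Connected)
    (D T : Fin n → ℝ)
    (hD : ∀ i, D i = ∑ j, (G.dist i j : ℝ))
    (hT : ∀ i, T i = ∑ j, (G.dist i j : ℝ) * D j) :
    (sInf {x | ∃ i j, x = Real.sqrt (T i * T j / (D i * D j))} ≤
        specRad (Matrix.of fun i j => (G.dist i j : ℝ)) ∧
      specRad (Matrix.of fun i j => (G.dist i j : ℝ)) ≤
        sSup {x | ∃ i j, x = Real.sqrt (T i * T j / (D i * D j))}) ∧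
    ((specRad (Matrix.of fun i j => (G.dist i j : ℝ)) =
        sInf {x | ∃ i j, x = Real.sqrt (T i * T j / (D i * D j))} ∨
      specRad (Matrix.of fun i j => (G.dist i j : ℝ)) =
        sSup {x | ∃ i j, x = Real.sqrt (T i * T j / (D i * D j))}) ↔
      ∀ i j, T i / D i = T j / D j) := by
  haveI : NeZero n := ⟨by omega⟩
  haveI : Nontrivial (Fin n) := ⟨⟨0, by omega⟩, ⟨1, by omega⟩, by simp [Fin.ext_iff]⟩
  set M : Matrix (Fin n) (Fin n) ℝ := Matrix.of fun i j => (G.dist i j : ℝ) with hMdef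
  have hM : M.IsHermitian := by
    ext i j
    simp [hMdef, Matrix.conjTranspose_apply, SimpleGraph.dist_comm]
  have hnn : ∀ i j, 0 ≤ M i j := fun i j => by
    show (0 : ℝ) ≤ (G.dist i j : ℝ)
    positivity
  have hoff : ∀ i j, i ≠ j → 0 < M i j := fun i j hij => by
    show (0 : ℝ) < (G.dist i j : ℝ)
    exact_mod_cast hG.pos_dist_of_ne hij
  have hDpos : ∀ i, 0 < D i := by
    intro i
    rw [hD]
    obtain ⟨j, hj⟩ := exists_ne i
    refine Finset.sum_pos' (fun k _ => by positivity) ⟨j, Finset.mem_univ j, ?_⟩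
    exact_mod_cast hG.pos_dist_of_ne (Ne.symm hj)
  have hTpos : ∀ i, 0 < T i := by
    intro i
    rw [hT]
    obtain ⟨j, hj⟩ := exists_ne i
    refine Finset.sum_pos' (fun k _ => mul_nonneg (by positivity) (hDpos k).le)
      ⟨j, Finset.mem_univ j, mul_pos ?_ (hDpos j)⟩
    exact_mod_cast hG.pos_dist_of_ne (Ne.symm hj)
  set r : Fin n → ℝ := fun i => T i / D i with hr
  have hrpos : ∀ i, 0 < r i := fun i => div_pos (hTpos i) (hDpos i)
  have hTMD : T = M *ᵥ D := by
    funext i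
    rw [hT]
    rfl
  obtain ⟨u, hupos, huev⟩ := perron hM hnn hoff
  -- key identity
  set W : ℝ := ∑ i, u i * D i with hW
  have hWpos : 0 < W := Finset.sum_pos (fun i _ => mul_pos (hupos i) (hDpos i))
    Finset.univ_nonempty
  have hkey : ∑ i, (u i * D i) * r i = lmax hM * W := by
    have h1 : ∀ i, (u i * D i) * r i = u i * T i := by
      intro i
      rw [hr]
      field_simp
      rw [mul_right_comm, mul_div_cancel_right₀ _ (ne_of_gt (hDpos i))]
    calc ∑ i, (u i * D i) * r i = ∑ i, u i * T i := by
          exact Finset.sum_congr rfl fun i _ => h1 i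
      _ = u ⬝ᵥ (M *ᵥ D) := by rw [hTMD]; rfl
      _ = (M *ᵥ u) ⬝ᵥ D := by
          have hMT : Mᵀ = M := by
            ext i j
            simpa using congrFun (congrFun hM i) j
          rw [Matrix.dotProduct_mulVec, ← Matrix.mulVec_transpose, hMT]
      _ = lmax hM * W := by
          rw [huev]
          simp only [smul_dotProduct, smul_eq_mul, hW]
          rw [dotProduct]
  -- extremal ratios
  have hne : (Finset.univ : Finset (Fin n)).Nonempty := Finset.univ_nonempty
  set rmin : ℝ := Finset.univ.inf' hne r with hrmin
  set rmax : ℝ := Finset.univ.sup' hne r with hrmax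
  have hrminle : ∀ i, rmin ≤ r i := fun i => Finset.inf'_le r (Finset.mem_univ i)
  have hrmaxle : ∀ i, r i ≤ rmax := fun i => Finset.le_sup' r (Finset.mem_univ i)
  obtain ⟨im, -, him⟩ := Finset.exists_mem_eq_inf' hne r
  obtain ⟨iM, -, hiM⟩ := Finset.exists_mem_eq_sup' hne r
  have hrminpos : 0 < rmin := by rw [hrmin, him]; exact hrpos im
  have hrmaxpos : 0 < rmax := by rw [hrmax, hiM]; exact hrpos iM
  -- bounds on lmax
  have hlow : rmin * W ≤ lmax hM * W := by
    rw [← hkey]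
    calc rmin * W = ∑ i, (u i * D i) * rmin := by
          rw [hW, Finset.mul_sum]
          exact Finset.sum_congr rfl fun i _ => mul_comm _ _
      _ ≤ ∑ i, (u i * D i) * r i := Finset.sum_le_sum fun i _ =>
          mul_le_mul_of_nonneg_left (hrminle i) (mul_pos (hupos i) (hDpos i)).le
  have hhigh : lmax hM * W ≤ rmax * W := by
    rw [← hkey]
    calc ∑ i, (u i * D i) * r i ≤ ∑ i, (u i * D i) * rmax := Finset.sum_le_sum fun i _ =>
          mul_le_mul_of_nonneg_left (hrmaxle i) (mul_pos (hupos i) (hDpos i)).le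
      _ = rmax * W := by
          rw [hW, Finset.mul_sum]
          exact Finset.sum_congr rfl fun i _ => mul_comm _ _
  have hlmin : rmin ≤ lmax hM := le_of_mul_le_mul_right hlow hWpos
  have hlmaxle : lmax hM ≤ rmax := le_of_mul_le_mul_right hhigh hWpos
  -- the set S
  set S : Set ℝ := {x | ∃ i j, x = Real.sqrt (T i * T j / (D i * D j))} with hS
  have hSval : ∀ i j : Fin n, Real.sqrt (T i * T j / (D i * D j)) = Real.sqrt (r i * r j) := by
    intro i j
    rw [hr]
    congr 1
    rw [div_mul_div_comm]
  have hSlow : ∀ x ∈ S, rmin ≤ x := by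
    rintro x ⟨i, j, rfl⟩
    rw [hSval]
    calc rmin = Real.sqrt (rmin * rmin) := (Real.sqrt_mul_self hrminpos.le).symm
      _ ≤ Real.sqrt (r i * r j) := Real.sqrt_le_sqrt
          (mul_le_mul (hrminle i) (hrminle j) hrminpos.le (hrpos i).le)
  have hShigh : ∀ x ∈ S, x ≤ rmax := by
    rintro x ⟨i, j, rfl⟩
    rw [hSval]
    calc Real.sqrt (r i * r j) ≤ Real.sqrt (rmax * rmax) := Real.sqrt_le_sqrt
          (mul_le_mul (hrmaxle i) (hrmaxle j) (hrpos j).le hrmaxpos.le)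
      _ = rmax := Real.sqrt_mul_self hrmaxpos.le
  have hminS : rmin ∈ S := by
    refine ⟨im, im, ?_⟩
    rw [hSval, ← him, Real.sqrt_mul_self hrminpos.le]
  have hmaxS : rmax ∈ S := by
    refine ⟨iM, iM, ?_⟩
    rw [hSval, ← hiM, Real.sqrt_mul_self hrmaxpos.le]
  have hInfS : sInf S = rmin := le_antisymm (csInf_le ⟨rmin, hSlow⟩ hminS)
    (le_csInf ⟨rmin, hminS⟩ hSlow)
  have hSupS : sSup S = rmax := le_antisymm (csSup_le ⟨rmin, hminS⟩ hShigh)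
    (le_csSup ⟨rmax, hShigh⟩ hmaxS)
  have hρ : specRad M = lmax hM := specRad_eq_lmax hM hnn
  constructor
  · exact ⟨hInfS ▸ hρ ▸ hlmin, hρ ▸ hSupS ▸ hlmaxle⟩
  · constructor
    · -- equality implies all ratios equal
      intro hcase
      have hconst : ∀ i, r i = lmax hM := by
        rcases hcase with hmin | hmaxc
        · -- lmax = rmin
          have hl : lmax hM = rmin := by rw [← hρ, hmin, hInfS]
          intro i
          by_contra hne'
          have hi : rmin < r i :=
            lt_of_le_of_ne (hrminle i) (fun h => hne' (h.symm.trans hl.symm))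
          have hstrict : rmin * W < ∑ k, (u k * D k) * r k := by
            have : ∀ k ∈ Finset.univ, (u k * D k) * rmin ≤ (u k * D k) * r k := fun k _ =>
              mul_le_mul_of_nonneg_left (hrminle k) (mul_pos (hupos k) (hDpos k)).le
            have h2 : (u i * D i) * rmin < (u i * D i) * r i :=
              (mul_lt_mul_iff_right₀ (mul_pos (hupos i) (hDpos i))).mpr hi
            calc rmin * W = ∑ k, (u k * D k) * rmin := by
                  rw [hW, Finset.mul_sum]
                  exact Finset.sum_congr rfl fun k _ => mul_comm _ _
              _ < ∑ k, (u k * D k) * r k :=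
                  Finset.sum_lt_sum this ⟨i, Finset.mem_univ i, h2⟩
          rw [hkey, ← hl] at hstrict
          exact lt_irrefl _ hstrict
        · -- lmax = rmax
          have hl : lmax hM = rmax := by rw [← hρ, hmaxc, hSupS]
          intro i
          by_contra hne'
          have hi : r i < rmax :=
            lt_of_le_of_ne (hrmaxle i) (fun h => hne' (h.trans hl.symm))
          have hstrict : ∑ k, (u k * D k) * r k < rmax * W := by
            have : ∀ k ∈ Finset.univ, (u k * D k) * r k ≤ (u k * D k) * rmax := fun k _ =>
              mul_le_mul_of_nonneg_left (hrmaxle k) (mul_pos (hupos k) (hDpos k)).le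
            have h2 : (u i * D i) * r i < (u i * D i) * rmax :=
              (mul_lt_mul_iff_right₀ (mul_pos (hupos i) (hDpos i))).mpr hi
            calc ∑ k, (u k * D k) * r k < ∑ k, (u k * D k) * rmax :=
                  Finset.sum_lt_sum this ⟨i, Finset.mem_univ i, h2⟩
              _ = rmax * W := by
                  rw [hW, Finset.mul_sum]
                  exact Finset.sum_congr rfl fun k _ => mul_comm _ _
          rw [hkey, ← hl] at hstrict
          exact lt_irrefl _ hstrict
      intro i j
      rw [show T i / D i = r i from rfl, show T j / D j = r j from rfl, hconst i, hconst j]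
    · -- all ratios equal implies equality (left case)
      intro hconst
      left
      have hc : ∀ i, r i = rmin := by
        intro i
        rw [hrmin, him]
        exact hconst i im
      have hl : lmax hM = rmin := by
        have : ∑ i, (u i * D i) * r i = rmin * W := by
          rw [hW, Finset.mul_sum]
          refine Finset.sum_congr rfl fun i _ => ?_
          rw [hc i, mul_comm]
        rw [hkey] at this
        exact mul_right_cancel₀ (ne_of_gt hWpos) this
      rw [hρ, hInfS, hl]
end

section
/- Let G be a finite simple connected graph on n ≥ 2 vertices v_1,…,v_n with distance signless Laplacian spectral radius q^D(G), and for indices i,j set h(i,j) = (D_i + D_j + sqrt((D_i − D_j)^2 + 4 T_i T_j/(D_i D_j)))/2. Then min_{1≤i,j≤n} h(i,j) ≤ q^D(G) ≤ max_{1≤i,j≤n} h(i,j), and equality holds in either bound if and only if D_1 + T_1/D_1 = D_2 + T_2/D_2 = … = D_n + T_n/D_n. -/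
open Matrix

section Aux

variable {n : ℕ}


lemma spec_eq_range {𝕜 : Type*} [RCLike 𝕜] (Q : Matrix (Fin n) (Fin n) 𝕜)
    (hQ : Q.IsHermitian) :
    spectrum 𝕜 Q = Set.range (fun i => (hQ.eigenvalues i : 𝕜)) := by
  conv_lhs => rw [hQ.spectral_theorem]
  rw [Unitary.conjStarAlgAut_apply, Unitary.spectrum_star_right_conjugate, spectrum_diagonal]
  rfl

lemma ofReal_mem_spec_iff (Q : Matrix (Fin n) (Fin n) ℝ) (r : ℝ) :
    (r : ℂ) ∈ spectrum ℂ (Q.map Complex.ofReal) ↔ r ∈ spectrum ℝ Q := by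
  rw [spectrum.mem_iff, spectrum.mem_iff, not_iff_not]
  have hmm : algebraMap ℂ (Matrix (Fin n) (Fin n) ℂ) (r : ℂ) - Q.map Complex.ofReal
      = (algebraMap ℝ (Matrix (Fin n) (Fin n) ℝ) r - Q).map (algebraMap ℝ ℂ) := by
    ext i j
    simp [Matrix.algebraMap_matrix_apply, Matrix.map_apply, apply_ite]
  rw [hmm, Matrix.isUnit_iff_isUnit_det, Matrix.isUnit_iff_isUnit_det, ← RingHom.mapMatrix_apply, ← RingHom.map_det]
  simp [isUnit_iff_ne_zero]

lemma isHermitian_map_ofReal (Q : Matrix (Fin n) (Fin n) ℝ) (hQ : Q.IsHermitian) :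
    (Q.map Complex.ofReal).IsHermitian := by
  have hS : ∀ i j, Q j i = Q i j := by
    intro i j
    conv_lhs => rw [← hQ]
    simp [Matrix.conjTranspose_apply]
  ext i j
  simp only [Matrix.conjTranspose_apply, Matrix.map_apply, RCLike.star_def,
    Complex.conj_ofReal, hS i j]

lemma modSet_eq (Q : Matrix (Fin n) (Fin n) ℝ) (hQ : Q.IsHermitian) :
    {x : ℝ | ∃ μ : ℂ, μ ∈ spectrum ℂ (Q.map Complex.ofReal) ∧ x = ‖μ‖}
      = Set.range (fun i => |hQ.eigenvalues i|) := by
  have hA := isHermitian_map_ofReal Q hQ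
  have hc := spec_eq_range _ hA
  have hr := spec_eq_range _ hQ
  have hrange : Set.range hA.eigenvalues = Set.range hQ.eigenvalues := by
    ext r
    constructor
    · rintro ⟨i, rfl⟩
      have : (hA.eigenvalues i : ℂ) ∈ spectrum ℂ (Q.map Complex.ofReal) := by
        rw [hc]; exact ⟨i, rfl⟩
      rw [ofReal_mem_spec_iff, hr] at this
      exact this
    · rintro ⟨i, rfl⟩
      have : hQ.eigenvalues i ∈ spectrum ℝ Q := by rw [hr]; exact ⟨i, rfl⟩
      rw [← ofReal_mem_spec_iff, hc] at this
      obtain ⟨j, hj⟩ := this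
      exact ⟨j, Complex.ofReal_inj.mp hj⟩
  ext x
  simp only [Set.mem_setOf_eq, hc]
  constructor
  · rintro ⟨μ, ⟨i, rfl⟩, rfl⟩
    have : hA.eigenvalues i ∈ Set.range hQ.eigenvalues := hrange ▸ ⟨i, rfl⟩
    obtain ⟨j, hj⟩ := this
    exact ⟨j, by simp [hj]⟩
  · rintro ⟨i, rfl⟩
    have : hQ.eigenvalues i ∈ Set.range hA.eigenvalues := hrange ▸ ⟨i, rfl⟩
    obtain ⟨j, hj⟩ := this
    exact ⟨(hA.eigenvalues j : ℂ), ⟨j, rfl⟩, by simp [hj]⟩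

lemma perron_s12 (hn : 0 < n) (Q : Matrix (Fin n) (Fin n) ℝ) (hQ : Q.IsHermitian)
    (hpos : ∀ i j, 0 < Q i j) :
    ∃ v : Fin n → ℝ, (∀ i, 0 < v i) ∧ Q *ᵥ v = specRad Q • v := by
  haveI : NeZero n := ⟨hn.ne'⟩
  set ν := hQ.eigenvalues with hν
  -- the top eigenvalue
  obtain ⟨i₀, hmax⟩ := Finite.exists_max ν
  set ρ₀ := ν i₀ with hρ₀
  -- the matrix ρ₀ • 1 - Q is positive semidefinite
  have hPSD : (ρ₀ • (1 : Matrix (Fin n) (Fin n) ℝ) - Q).PosSemidef := by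
    set U : Matrix (Fin n) (Fin n) ℝ := (hQ.eigenvectorUnitary : Matrix (Fin n) (Fin n) ℝ)
      with hUdef
    have hUU : U * Uᴴ = 1 := by
      rw [← Matrix.star_eq_conjTranspose]
      exact (Matrix.mem_unitaryGroup_iff).mp hQ.eigenvectorUnitary.2
    have hd : Matrix.PosSemidef (diagonal (fun i => ρ₀ - ν i)) :=
      Matrix.PosSemidef.diagonal (fun i => sub_nonneg.mpr (hmax i))
    have hps := hd.mul_mul_conjTranspose_same U
    have hofreal : (RCLike.ofReal ∘ ν : Fin n → ℝ) = ν := by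
      funext i; simp
    have hdiag : diagonal (fun i => ρ₀ - ν i)
        = ρ₀ • (1 : Matrix (Fin n) (Fin n) ℝ) - diagonal ν := by
      ext i j
      by_cases hij : i = j <;>
        simp [Matrix.diagonal_apply, hij, Matrix.one_apply, Matrix.sub_apply]
    have h1 : ρ₀ • (1 : Matrix (Fin n) (Fin n) ℝ) - Q = U * diagonal (fun i => ρ₀ - ν i) * Uᴴ := by
      rw [hdiag, Matrix.mul_sub, mul_smul_comm, Matrix.mul_one, Matrix.sub_mul, smul_mul_assoc, hUU]
      congr 1
      conv_lhs => rw [hQ.spectral_theorem]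
      rw [hofreal, Unitary.conjStarAlgAut_apply, Matrix.star_eq_conjTranspose]
    rw [h1]
    exact hps
  -- quadratic form bound
  have hquad : ∀ x : Fin n → ℝ, x ⬝ᵥ (Q *ᵥ x) ≤ ρ₀ * (x ⬝ᵥ x) := by
    intro x
    have h0 := hPSD.dotProduct_mulVec_nonneg x
    have hstar : star x = x := by simp
    rw [hstar] at h0
    have hexp : x ⬝ᵥ ((ρ₀ • (1 : Matrix (Fin n) (Fin n) ℝ) - Q) *ᵥ x)
        = ρ₀ * (x ⬝ᵥ x) - x ⬝ᵥ (Q *ᵥ x) := by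
      rw [Matrix.sub_mulVec, dotProduct_sub, Matrix.smul_mulVec,
        Matrix.one_mulVec, dotProduct_smul]
      simp [smul_eq_mul]
    rw [hexp] at h0
    linarith
  -- entrywise absolute-value inequality
  have habs : ∀ w : Fin n → ℝ, |w ⬝ᵥ (Q *ᵥ w)| ≤
      (fun i => |w i|) ⬝ᵥ (Q *ᵥ fun i => |w i|) := by
    intro w
    simp only [dotProduct, Matrix.mulVec]
    refine (Finset.abs_sum_le_sum_abs _ _).trans ?_
    refine Finset.sum_le_sum fun i _ => ?_
    rw [abs_mul]
    refine mul_le_mul_of_nonneg_left ?_ (abs_nonneg _)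
    refine (Finset.abs_sum_le_sum_abs _ _).trans ?_
    refine le_of_eq (Finset.sum_congr rfl fun j _ => ?_)
    rw [abs_mul, abs_of_pos (hpos i j)]
  -- eigen computations
  have hdot : ∀ i : Fin n, (⇑(hQ.eigenvectorBasis i) : Fin n → ℝ) ⬝ᵥ
      (⇑(hQ.eigenvectorBasis i) : Fin n → ℝ) = 1 := by
    intro i
    have h1 : ‖hQ.eigenvectorBasis i‖ = 1 := hQ.eigenvectorBasis.orthonormal.1 i
    have h2 := real_inner_self_eq_norm_sq (hQ.eigenvectorBasis i)
    rw [EuclideanSpace.inner_eq_star_dotProduct] at h2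
    simpa [h1] using h2
  have heig : ∀ i : Fin n, (⇑(hQ.eigenvectorBasis i) : Fin n → ℝ) ⬝ᵥ
      (Q *ᵥ ⇑(hQ.eigenvectorBasis i)) = ν i := by
    intro i
    rw [hQ.mulVec_eigenvectorBasis, dotProduct_smul, hdot i]
    simp [hν]
  have habsdot : ∀ w : Fin n → ℝ, (fun i => |w i|) ⬝ᵥ (fun i => |w i|) = w ⬝ᵥ w := by
    intro w
    simp only [dotProduct]
    exact Finset.sum_congr rfl fun i _ => by rw [← abs_mul, abs_mul_self]
  -- all eigenvalue moduli are at most ρ₀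
  have hmod : ∀ i, |ν i| ≤ ρ₀ := by
    intro i
    have h1 : |ν i| = |(⇑(hQ.eigenvectorBasis i) : Fin n → ℝ) ⬝ᵥ
        (Q *ᵥ ⇑(hQ.eigenvectorBasis i))| := by rw [heig i]
    rw [h1]
    refine (habs _).trans ?_
    refine (hquad _).trans ?_
    rw [habsdot, hdot i, mul_one]
  -- specRad equals ρ₀
  have hSR : specRad Q = ρ₀ := by
    unfold specRad
    rw [modSet_eq Q hQ]
    have hfin : (Set.range fun i => |ν i|).Finite := Set.finite_range _
    have hne : (Set.range fun i => |ν i|).Nonempty := Set.range_nonempty _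
    refine le_antisymm (csSup_le hne ?_) ?_
    · rintro x ⟨i, rfl⟩; exact hmod i
    · refine le_trans (le_abs_self ρ₀) (le_csSup hfin.bddAbove ⟨i₀, rfl⟩)
  -- the Perron vector
  set w : Fin n → ℝ := ⇑(hQ.eigenvectorBasis i₀) with hw
  set v : Fin n → ℝ := fun i => |w i| with hvdef
  have hvv : v ⬝ᵥ v = 1 := by rw [hvdef, habsdot w, hdot i₀]
  have hvQv : v ⬝ᵥ (Q *ᵥ v) = ρ₀ := by
    have hle : ρ₀ ≤ v ⬝ᵥ (Q *ᵥ v) := by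
      calc ρ₀ = w ⬝ᵥ (Q *ᵥ w) := (heig i₀).symm
      _ ≤ |w ⬝ᵥ (Q *ᵥ w)| := le_abs_self _
      _ ≤ v ⬝ᵥ (Q *ᵥ v) := habs w
    have hge : v ⬝ᵥ (Q *ᵥ v) ≤ ρ₀ := by
      have := hquad v; rw [hvv, mul_one] at this; exact this
    linarith
  have hMv : Q *ᵥ v = ρ₀ • v := by
    have h0 : star v ⬝ᵥ ((ρ₀ • (1 : Matrix (Fin n) (Fin n) ℝ) - Q) *ᵥ v) = 0 := by
      have hstar : star v = v := by simp
      rw [hstar, Matrix.sub_mulVec, dotProduct_sub, Matrix.smul_mulVec,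
        Matrix.one_mulVec, dotProduct_smul, hvQv]
      simp [hvv]
    have := (hPSD.dotProduct_mulVec_zero_iff v).mp h0
    rw [Matrix.sub_mulVec, Matrix.smul_mulVec, Matrix.one_mulVec, sub_eq_zero] at this
    exact this.symm
  -- positivity
  have hvnn : ∀ i, 0 ≤ v i := fun i => abs_nonneg _
  have hvne : ∃ j, 0 < v j := by
    by_contra hcon
    push_neg at hcon
    have : ∀ i, v i = 0 := fun i => le_antisymm (hcon i) (hvnn i)
    have : v ⬝ᵥ v = 0 := by simp [dotProduct, this]
    rw [hvv] at this; norm_num at this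
  obtain ⟨j₀, hj₀⟩ := hvne
  have hQvpos : ∀ i, 0 < (Q *ᵥ v) i := by
    intro i
    simp only [Matrix.mulVec, dotProduct]
    refine Finset.sum_pos' (fun j _ => mul_nonneg (hpos i j).le (hvnn j)) ?_
    exact ⟨j₀, Finset.mem_univ _, mul_pos (hpos i j₀) hj₀⟩
  have hρ₀pos : 0 < ρ₀ := by
    have h1 := hQvpos j₀
    rw [hMv] at h1
    simp only [Pi.smul_apply, smul_eq_mul] at h1
    by_contra hcon
    push_neg at hcon
    nlinarith [hvnn j₀]
  refine ⟨v, fun i => ?_, by rw [hSR]; exact hMv⟩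
  have h1 := hQvpos i
  rw [hMv] at h1
  simp only [Pi.smul_apply, smul_eq_mul] at h1
  nlinarith [hvnn i]

end Aux

theorem stmt_12 {n : ℕ} (hn : 2 ≤ n) (G : SimpleGraph (Fin n)) (hG : G.Connected)
    (D T : Fin n → ℝ)
    (hD : ∀ i, D i = ∑ j, (G.dist i j : ℝ))
    (hT : ∀ i, T i = ∑ j, (G.dist i j : ℝ) * D j)
    (h : Fin n → Fin n → ℝ)
    (hh : ∀ i j, h i j =
      (D i + D j + Real.sqrt ((D i - D j) ^ 2 + 4 * T i * T j / (D i * D j))) / 2) :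
    (sInf {x | ∃ i j, x = h i j} ≤
        specRad (Matrix.diagonal D + Matrix.of fun i j => (G.dist i j : ℝ)) ∧
      specRad (Matrix.diagonal D + Matrix.of fun i j => (G.dist i j : ℝ)) ≤
        sSup {x | ∃ i j, x = h i j}) ∧
    ((specRad (Matrix.diagonal D + Matrix.of fun i j => (G.dist i j : ℝ)) =
        sInf {x | ∃ i j, x = h i j} ∨
      specRad (Matrix.diagonal D + Matrix.of fun i j => (G.dist i j : ℝ)) =
        sSup {x | ∃ i j, x = h i j}) ↔
      ∀ i j, D i + T i / D i = D j + T j / D j) := by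
  have hn0 : 0 < n := by omega
  set Q : Matrix (Fin n) (Fin n) ℝ :=
    Matrix.diagonal D + Matrix.of fun i j => (G.dist i j : ℝ) with hQdef
  set S : Set ℝ := {x | ∃ i j, x = h i j} with hSdef
  set ρ : ℝ := specRad Q with hρdef
  have i0 : Fin n := ⟨0, hn0⟩
  -- positivity facts
  have hexne : ∀ i : Fin n, ∃ j, j ≠ i := by
    intro i
    exact Fintype.exists_ne_of_one_lt_card (by simp; omega) i
  have hdistnn : ∀ i j : Fin n, (0:ℝ) ≤ (G.dist i j : ℝ) := fun i j => Nat.cast_nonneg _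
  have hdistpos : ∀ i j : Fin n, i ≠ j → (0:ℝ) < (G.dist i j : ℝ) := by
    intro i j hij
    exact_mod_cast hG.pos_dist_of_ne hij
  have hDpos : ∀ i, 0 < D i := by
    intro i
    obtain ⟨j, hj⟩ := hexne i
    rw [hD i]
    refine Finset.sum_pos' (fun k _ => hdistnn i k) ⟨j, Finset.mem_univ _, hdistpos i j hj.symm⟩
  have hTpos : ∀ i, 0 < T i := by
    intro i
    obtain ⟨j, hj⟩ := hexne i
    rw [hT i]
    refine Finset.sum_pos' (fun k _ => mul_nonneg (hdistnn i k) (hDpos k).le)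
      ⟨j, Finset.mem_univ _, mul_pos (hdistpos i j hj.symm) (hDpos j)⟩
  have hQapp : ∀ i j, Q i j = Matrix.diagonal D i j + (G.dist i j : ℝ) := by
    intro i j; rw [hQdef]; simp [Matrix.add_apply]
  have hQpos : ∀ i j, 0 < Q i j := by
    intro i j
    rw [hQapp i j]
    by_cases hij : i = j
    · subst hij
      simp [SimpleGraph.dist_self, hDpos i]
    · rw [Matrix.diagonal_apply_ne _ hij]
      simpa using hdistpos i j hij
  have hQsymm : ∀ i j, Q j i = Q i j := by
    intro i j
    rw [hQapp, hQapp, SimpleGraph.dist_comm]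
    congr 1
    by_cases hij : i = j
    · subst hij; rfl
    · rw [Matrix.diagonal_apply_ne _ hij, Matrix.diagonal_apply_ne _ (Ne.symm hij)]
  have hQt : Qᵀ = Q := by
    ext i j; rw [Matrix.transpose_apply, hQsymm]
  have hQherm : Q.IsHermitian := by
    unfold Matrix.IsHermitian
    ext i j
    rw [Matrix.conjTranspose_apply, hQsymm i j]
    simp
  -- Q applied to the transmission vector
  have hQu : ∀ i, (Q *ᵥ D) i = D i * (D i + T i / D i) := by
    intro i
    have e1 : (Q *ᵥ D) i = ∑ j, (Matrix.diagonal D i j * D j + (G.dist i j : ℝ) * D j) := by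
      simp only [Matrix.mulVec, dotProduct]
      refine Finset.sum_congr rfl fun j _ => ?_
      rw [hQapp i j, add_mul]
    rw [e1, Finset.sum_add_distrib]
    have e2 : ∑ j, Matrix.diagonal D i j * D j = D i * D i := by
      rw [Finset.sum_eq_single_of_mem i (Finset.mem_univ i)]
      · rw [Matrix.diagonal_apply_eq]
      · intro j _ hji
        rw [Matrix.diagonal_apply_ne _ (Ne.symm hji), zero_mul]
    rw [e2, ← hT i]
    have hDne := (hDpos i).ne'
    field_simp
  -- the Perron eigenvector
  obtain ⟨v, hv, hvQ⟩ := perron_s12 hn0 Q hQherm hQpos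
  have hdotid : ∑ i, v i * (Q *ᵥ D) i = ρ * ∑ i, v i * D i := by
    have e1 : v ⬝ᵥ (Q *ᵥ D) = Matrix.vecMul v Q ⬝ᵥ D := dotProduct_mulVec v Q D
    have e2 : Matrix.vecMul v Q = Q *ᵥ v := by
      rw [← hQt, Matrix.mulVec_transpose, hQt]
    rw [e2, hvQ] at e1
    simpa [dotProduct, Finset.mul_sum, mul_assoc] using e1
  have key : ∑ i, (v i * D i) * ((D i + T i / D i) - ρ) = 0 := by
    have e3 : ∑ i, (v i * D i) * ((D i + T i / D i) - ρ)
        = (∑ i, v i * (Q *ᵥ D) i) - ρ * ∑ i, v i * D i := by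
      rw [Finset.mul_sum, ← Finset.sum_sub_distrib]
      refine Finset.sum_congr rfl fun i _ => ?_
      rw [hQu i]
      ring
    rw [e3, hdotid, sub_self]
  -- h i i
  have hii : ∀ i, h i i = D i + T i / D i := by
    intro i
    rw [hh i i]
    have e4 : (D i - D i) ^ 2 + 4 * T i * T i / (D i * D i) = (2 * (T i / D i)) ^ 2 := by
      have := (hDpos i).ne'
      field_simp
      ring
    rw [e4, Real.sqrt_sq (mul_nonneg zero_le_two (div_nonneg (hTpos i).le (hDpos i).le))]
    field_simp
    ring
  have hfS : ∀ i, (D i + T i / D i) ∈ S := fun i => ⟨i, i, (hii i).symm⟩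
  have hSfin : S.Finite := by
    refine Set.Finite.subset (Set.finite_range (fun p : Fin n × Fin n => h p.1 p.2)) ?_
    rintro x ⟨i, j, rfl⟩
    exact ⟨(i, j), rfl⟩
  have hbdda : BddAbove S := hSfin.bddAbove
  have hbddb : BddBelow S := hSfin.bddBelow
  -- existence of indices on both sides of ρ
  have hex_le : ∃ i, D i + T i / D i ≤ ρ := by
    by_contra hcon
    push_neg at hcon
    have hpos' : 0 < ∑ i, (v i * D i) * ((D i + T i / D i) - ρ) := by
      refine Finset.sum_pos (fun i _ => mul_pos (mul_pos (hv i) (hDpos i))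
        (by linarith [hcon i])) ⟨i0, Finset.mem_univ _⟩
    linarith [key]
  have hex_ge : ∃ i, ρ ≤ D i + T i / D i := by
    by_contra hcon
    push_neg at hcon
    have hneg' : ∑ i, (v i * D i) * ((D i + T i / D i) - ρ) < 0 := by
      refine Finset.sum_neg (fun i _ => mul_neg_of_pos_of_neg (mul_pos (hv i) (hDpos i))
        (by linarith [hcon i])) ⟨i0, Finset.mem_univ _⟩
    linarith [key]
  constructor
  · obtain ⟨i, hi⟩ := hex_le
    obtain ⟨j, hj⟩ := hex_ge
    exact ⟨(csInf_le hbddb (hfS i)).trans hi, hj.trans (le_csSup hbdda (hfS j))⟩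
  constructor
  · -- equality implies constancy
    rintro (hρeq | hρeq) i j
    · have hall : ∀ k, ρ ≤ D k + T k / D k := by
        intro k
        rw [hρeq]
        exact csInf_le hbddb (hfS k)
      have hzero := (Finset.sum_eq_zero_iff_of_nonneg
        (fun k _ => mul_nonneg (mul_pos (hv k) (hDpos k)).le (by linarith [hall k]))).mp key
      have hi' := hzero i (Finset.mem_univ i)
      have hj' := hzero j (Finset.mem_univ j)
      have hi'' : D i + T i / D i = ρ := by
        rcases mul_eq_zero.mp hi' with h1 | h1
        · exact absurd h1 (mul_pos (hv i) (hDpos i)).ne'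
        · linarith
      have hj'' : D j + T j / D j = ρ := by
        rcases mul_eq_zero.mp hj' with h1 | h1
        · exact absurd h1 (mul_pos (hv j) (hDpos j)).ne'
        · linarith
      rw [hi'', hj'']
    · have hall : ∀ k, D k + T k / D k ≤ ρ := by
        intro k
        rw [hρeq]
        exact le_csSup hbdda (hfS k)
      have hzero := (Finset.sum_eq_zero_iff_of_nonpos
        (fun k _ => mul_nonpos_of_nonneg_of_nonpos (mul_pos (hv k) (hDpos k)).le
          (by linarith [hall k]))).mp key
      have hi' := hzero i (Finset.mem_univ i)
      have hj' := hzero j (Finset.mem_univ j)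
      have hi'' : D i + T i / D i = ρ := by
        rcases mul_eq_zero.mp hi' with h1 | h1
        · exact absurd h1 (mul_pos (hv i) (hDpos i)).ne'
        · linarith
      have hj'' : D j + T j / D j = ρ := by
        rcases mul_eq_zero.mp hj' with h1 | h1
        · exact absurd h1 (mul_pos (hv j) (hDpos j)).ne'
        · linarith
      rw [hi'', hj'']
  · -- constancy implies equality
    intro hcon
    set c : ℝ := D i0 + T i0 / D i0 with hcdef
    have hfc : ∀ i, D i + T i / D i = c := fun i => hcon i i0
    have hTi : ∀ i, T i = (c - D i) * D i := by
      intro i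
      have h1 : T i / D i = c - D i := by linarith [hfc i]
      rw [← h1, div_mul_cancel₀ _ (hDpos i).ne']
    have hcDi : ∀ i, 0 < c - D i := by
      intro i
      have h1 : T i / D i = c - D i := by linarith [hfc i]
      rw [← h1]
      exact div_pos (hTpos i) (hDpos i)
    have hhc : ∀ i j, h i j = c := by
      intro i j
      rw [hh i j]
      have hE : (D i - D j) ^ 2 + 4 * T i * T j / (D i * D j)
          = (2 * c - D i - D j) ^ 2 := by
        rw [hTi i, hTi j]
        have := (hDpos i).ne'
        have := (hDpos j).ne'
        field_simp
        ring
      rw [hE, Real.sqrt_sq (by linarith [hcDi i, hcDi j])]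
      ring
    have hSc : S = {c} := by
      ext x
      simp only [hSdef, Set.mem_setOf_eq, Set.mem_singleton_iff]
      constructor
      · rintro ⟨i, j, rfl⟩
        exact hhc i j
      · rintro rfl
        exact ⟨i0, i0, (hhc i0 i0).symm⟩
    have hρc : ρ = c := by
      have key' : (∑ i, v i * D i) * (c - ρ) = 0 := by
        rw [Finset.sum_mul, ← key]
        refine Finset.sum_congr rfl fun i _ => ?_
        rw [hfc i]
      have hsum : 0 < ∑ i, v i * D i :=
        Finset.sum_pos (fun i _ => mul_pos (hv i) (hDpos i)) ⟨i0, Finset.mem_univ _⟩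
      rcases mul_eq_zero.mp key' with h1 | h1
      · exact absurd h1 hsum.ne'
      · linarith
    right
    rw [hρc, hSc]
    exact (csSup_singleton c).symm
end

section
/- Let n ≥ 2 and let A = (a_{ij}) be the adjacency matrix of a strongly connected simple digraph on n vertices, i.e., an n×n 0-1 matrix with zero diagonal that is irreducible. Let Q = diag(d_1^+,…,d_n^+) + A be the signless Laplacian matrix of the digraph and q = ρ(Q) its spectral radius. For indices i,j set G(i,j) = (d_i^+ + d_j^+ + sqrt((d_i^+ − d_j^+)^2 + 4 m_i^+ m_j^+))/2. Then min{ G(i,j) : a_{ij} = 1 } ≤ q ≤ max{ G(i,j) : a_{ij} = 1 }. -/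
open Matrix

section Helpers

open Filter Topology

attribute [local instance] Matrix.linftyOpNormedRing Matrix.linftyOpNormedAlgebra
  Matrix.linftyOpNormedAddCommGroup Matrix.linftyOpNormedSpace

variable {n : ℕ}


variable {n : ℕ}

lemma mulNonneg {B C : Matrix (Fin n) (Fin n) ℝ} (hB : ∀ i j, 0 ≤ B i j)
    (hC : ∀ i j, 0 ≤ C i j) : ∀ i j, 0 ≤ (B * C) i j := fun i j => by
  rw [Matrix.mul_apply]
  exact Finset.sum_nonneg fun k _ => mul_nonneg (hB i k) (hC k j)

lemma powNonneg {B : Matrix (Fin n) (Fin n) ℝ} (hB : ∀ i j, 0 ≤ B i j) (k : ℕ) :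
    ∀ i j, 0 ≤ (B ^ k) i j := by
  induction k with
  | zero => intro i j; simp [Matrix.one_apply]; positivity
  | succ k ih => rw [pow_succ]; exact mulNonneg ih hB

lemma mulMonoRight {B C D : Matrix (Fin n) (Fin n) ℝ} (hBC : ∀ i j, B i j ≤ C i j)
    (hD : ∀ i j, 0 ≤ D i j) : ∀ i j, (B * D) i j ≤ (C * D) i j := fun i j => by
  rw [Matrix.mul_apply, Matrix.mul_apply]
  exact Finset.sum_le_sum fun k _ => mul_le_mul_of_nonneg_right (hBC i k) (hD k j)

lemma mulMonoLeft {B C D : Matrix (Fin n) (Fin n) ℝ} (hB : ∀ i j, 0 ≤ B i j)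
    (hCD : ∀ i j, C i j ≤ D i j) : ∀ i j, (B * C) i j ≤ (B * D) i j := fun i j => by
  rw [Matrix.mul_apply, Matrix.mul_apply]
  exact Finset.sum_le_sum fun k _ => mul_le_mul_of_nonneg_left (hCD k j) (hB i k)

lemma powMono {B C : Matrix (Fin n) (Fin n) ℝ} (hB : ∀ i j, 0 ≤ B i j)
    (hBC : ∀ i j, B i j ≤ C i j) (k : ℕ) : ∀ i j, (B ^ k) i j ≤ (C ^ k) i j := by
  have hC : ∀ i j, 0 ≤ C i j := fun i j => le_trans (hB i j) (hBC i j)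
  induction k with
  | zero => intro i j; simp
  | succ k ih =>
    intro i j
    rw [pow_succ, pow_succ]
    exact le_trans (mulMonoRight ih hB i j) (mulMonoLeft (powNonneg hC k) hBC i j)

lemma oneAddPow {Q : Matrix (Fin n) (Fin n) ℝ} (hQ : ∀ i j, 0 ≤ Q i j) (K t : ℕ)
    (ht : t ≤ K) : ∀ i j, (Q ^ t) i j ≤ ((1 + Q) ^ K) i j := by
  have h1Q : ∀ i j, 0 ≤ (1 + Q) i j := fun i j => by
    have : (0:ℝ) ≤ (1 : Matrix (Fin n) (Fin n) ℝ) i j := by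
      simp [Matrix.one_apply]; positivity
    simpa [Matrix.add_apply] using add_nonneg this (hQ i j)
  induction K generalizing t with
  | zero =>
    interval_cases t
    intro i j; simp
  | succ K ih =>
    intro i j
    have expand : ((1 + Q) ^ (K + 1)) i j = ((1 + Q) ^ K) i j + ((1 + Q) ^ K * Q) i j := by
      rw [pow_succ, mul_add, mul_one, Matrix.add_apply]
    rcases Nat.lt_or_ge t (K + 1) with h | h
    · have := ih t (Nat.lt_succ_iff.mp h) i j
      have h2 : 0 ≤ ((1 + Q) ^ K * Q) i j := mulNonneg (powNonneg h1Q K) hQ i j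
      rw [expand]; linarith
    · have ht' : t = K + 1 := le_antisymm ht h
      subst ht'
      have h3 : (Q ^ (K + 1)) i j = (Q ^ K * Q) i j := by rw [pow_succ]
      have h4 : (Q ^ K * Q) i j ≤ ((1 + Q) ^ K * Q) i j :=
        mulMonoRight (fun a b => (powMono hQ (fun a b => by
          have : (0:ℝ) ≤ (1 : Matrix (Fin n) (Fin n) ℝ) a b := by
            simp [Matrix.one_apply]; positivity
          simp [Matrix.add_apply]; linarith) K) a b) hQ i j
      have h5 : 0 ≤ ((1 + Q) ^ K) i j := powNonneg h1Q K i j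
      rw [expand, h3]; linarith

lemma quad_upper {du dv mu mv t : ℝ} (hmu : 0 ≤ mu) (hmv : 0 ≤ mv)
    (h : |t - du| * |t - dv| ≤ mu * mv) :
    t ≤ (du + dv + Real.sqrt ((du - dv) ^ 2 + 4 * mu * mv)) / 2 := by
  set s := Real.sqrt ((du - dv) ^ 2 + 4 * mu * mv) with hs
  have hnn : 0 ≤ (du - dv) ^ 2 + 4 * mu * mv := by positivity
  have hs2 : s ^ 2 = (du - dv) ^ 2 + 4 * mu * mv := Real.sq_sqrt hnn
  have hs0 : 0 ≤ s := Real.sqrt_nonneg _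
  have habs : |du - dv| ≤ s := by
    rw [hs]
    calc |du - dv| = Real.sqrt ((du - dv) ^ 2) := (Real.sqrt_sq_eq_abs _).symm
    _ ≤ _ := Real.sqrt_le_sqrt (by nlinarith)
  rcases le_or_gt t du with h1 | h1
  · have := abs_sub_abs_le_abs_sub du dv
    nlinarith [abs_nonneg (du - dv), neg_abs_le (du - dv)]
  rcases le_or_gt t dv with h2 | h2
  · nlinarith [neg_abs_le (du - dv)]
  · have e1 : |t - du| = t - du := abs_of_pos (by linarith)
    have e2 : |t - dv| = t - dv := abs_of_pos (by linarith)
    rw [e1, e2] at h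
    have hc : 0 < 2 * t - du - dv := by linarith
    have : (2 * t - du - dv) ^ 2 ≤ s ^ 2 := by nlinarith
    nlinarith

lemma quad_lower {du dv mu mv ρ : ℝ} (h1 : du < ρ) (h2 : dv < ρ)
    (h : mu * mv ≤ (ρ - du) * (ρ - dv)) :
    (du + dv + Real.sqrt ((du - dv) ^ 2 + 4 * mu * mv)) / 2 ≤ ρ := by
  have hnn : 0 ≤ (du - dv) ^ 2 + 4 * mu * mv ∨ (du - dv) ^ 2 + 4 * mu * mv < 0 :=
    le_or_gt _ _
  rcases hnn with hnn | hnn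
  · have hle : Real.sqrt ((du - dv) ^ 2 + 4 * mu * mv) ≤ 2 * ρ - du - dv := by
      have h3 : (du - dv) ^ 2 + 4 * mu * mv ≤ (2 * ρ - du - dv) ^ 2 := by nlinarith
      calc Real.sqrt ((du - dv) ^ 2 + 4 * mu * mv) ≤ Real.sqrt ((2 * ρ - du - dv) ^ 2) :=
            Real.sqrt_le_sqrt h3
      _ = |2 * ρ - du - dv| := Real.sqrt_sq_eq_abs _
      _ = 2 * ρ - du - dv := abs_of_pos (by linarith)
    linarith
  · have : Real.sqrt ((du - dv) ^ 2 + 4 * mu * mv) = 0 :=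
      Real.sqrt_eq_zero_of_nonpos hnn.le
    rw [this]; linarith


lemma rowsum_le_norm (N : Matrix (Fin n) (Fin n) ℂ) (i : Fin n) :
    ∑ j, ‖N i j‖ ≤ ‖N‖ := by
  rw [Matrix.linfty_opNorm_def]
  have h1 : (∑ j, ‖N i j‖₊) ≤ (Finset.univ : Finset (Fin n)).sup fun i => ∑ j, ‖N i j‖₊ :=
    Finset.le_sup (f := fun i => ∑ j, ‖N i j‖₊) (Finset.mem_univ i)
  calc ∑ j, ‖N i j‖ = ((∑ j, ‖N i j‖₊ : NNReal) : ℝ) := by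
        push_cast
        rfl
  _ ≤ _ := by exact_mod_cast h1

lemma specUpperBound {N : Matrix (Fin n) (Fin n) ℂ} {ρ : ℝ}
    (hle : ∀ μ ∈ spectrum ℂ N, ‖μ‖ ≤ ρ) :
    spectralRadius ℂ N ≤ ENNReal.ofReal ρ := by
  rw [spectralRadius]
  refine iSup₂_le fun μ hμ => ?_
  have := hle μ hμ
  calc (‖μ‖₊ : ENNReal) = ENNReal.ofReal (‖μ‖) := by
        rw [← coe_nnnorm, ENNReal.ofReal_coe_nnreal]
  _ ≤ _ := ENNReal.ofReal_le_ofReal this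

lemma mulVecMono {Q : Matrix (Fin n) (Fin n) ℝ} (hQ : ∀ i j, 0 ≤ Q i j)
    {x y : Fin n → ℝ} (h : ∀ i, x i ≤ y i) : ∀ i, (Q *ᵥ x) i ≤ (Q *ᵥ y) i := fun i => by
  simp only [Matrix.mulVec, dotProduct]
  exact Finset.sum_le_sum fun j _ => mul_le_mul_of_nonneg_left (h j) (hQ i j)

lemma specLower {Qm : Matrix (Fin n) (Fin n) ℝ} (hn : 0 < n)
    (hQ0 : ∀ i j, 0 ≤ Qm i j) {w : Fin n → ℝ} (hw : ∀ i, 0 < w i) {σ : ℝ} (hσ : 0 ≤ σ)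
    (h : ∀ i, σ * w i ≤ (Qm *ᵥ w) i) :
    ENNReal.ofReal σ ≤ spectralRadius ℂ (Qm.map Complex.ofReal) := by
  have hiter : ∀ k, ∀ i, σ ^ k * w i ≤ ((Qm ^ k) *ᵥ w) i := by
    intro k
    induction k with
    | zero => intro i; simp [Matrix.one_mulVec]
    | succ k ih =>
      intro i
      have h1 : (Qm ^ (k + 1)) *ᵥ w = Qm *ᵥ ((Qm ^ k) *ᵥ w) := by
        rw [Matrix.mulVec_mulVec, ← pow_succ']
      rw [h1]
      have h2 : ∀ i, (σ ^ k) * w i ≤ ((Qm ^ k) *ᵥ w) i := ih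
      have h3 : (Qm *ᵥ (fun i => σ ^ k * w i)) i ≤ (Qm *ᵥ ((Qm ^ k) *ᵥ w)) i :=
        mulVecMono hQ0 h2 i
      have h4 : (Qm *ᵥ (fun i => σ ^ k * w i)) i = σ ^ k * (Qm *ᵥ w) i := by
        simp only [Matrix.mulVec, dotProduct, Finset.mul_sum]
        exact Finset.sum_congr rfl fun j _ => by ring
      have h5 : σ ^ (k + 1) * w i ≤ σ ^ k * (Qm *ᵥ w) i := by
        rw [pow_succ']
        calc σ * σ ^ k * w i = σ ^ k * (σ * w i) := by ring
        _ ≤ σ ^ k * (Qm *ᵥ w) i := by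
            exact mul_le_mul_of_nonneg_left (h i) (pow_nonneg hσ k)
      linarith
  -- index and constants
  set i0 : Fin n := ⟨0, hn⟩
  obtain ⟨W, -, hW⟩ := Finset.exists_max_image Finset.univ w ⟨i0, Finset.mem_univ i0⟩
  set Wv := w W with hWv
  have hWpos : 0 < Wv := hw W
  set c : ℝ := w i0 / Wv with hc
  have hcpos : 0 < c := div_pos (hw i0) hWpos
  -- norm bound
  set N : Matrix (Fin n) (Fin n) ℂ := Qm.map Complex.ofReal with hN
  have hnorm : ∀ k, c * σ ^ k ≤ ‖N ^ k‖ := by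
    intro k
    have hmap : N ^ k = (Qm ^ k).map Complex.ofReal := by
      rw [hN]
      have : (Qm.map Complex.ofReal) = Complex.ofRealHom.mapMatrix Qm := rfl
      rw [this, ← map_pow]
      rfl
    have hrow : ∑ j, ‖(N ^ k) i0 j‖ = ∑ j, (Qm ^ k) i0 j := by
      rw [hmap]
      refine Finset.sum_congr rfl fun j _ => ?_
      simp [Matrix.map_apply, Complex.norm_real, Real.norm_eq_abs, abs_of_nonneg (powNonneg hQ0 k i0 j)]
    have hrs : σ ^ k * w i0 ≤ (∑ j, (Qm ^ k) i0 j) * Wv := by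
      calc σ ^ k * w i0 ≤ ((Qm ^ k) *ᵥ w) i0 := hiter k i0
      _ = ∑ j, (Qm ^ k) i0 j * w j := by simp [Matrix.mulVec, dotProduct]
      _ ≤ ∑ j, (Qm ^ k) i0 j * Wv := Finset.sum_le_sum fun j _ =>
          mul_le_mul_of_nonneg_left (hW j (Finset.mem_univ j)) (powNonneg hQ0 k i0 j)
      _ = (∑ j, (Qm ^ k) i0 j) * Wv := by rw [Finset.sum_mul]
    have : c * σ ^ k ≤ ∑ j, (Qm ^ k) i0 j := by
      rw [hc, div_mul_eq_mul_div, div_le_iff₀ hWpos]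
      linarith
    calc c * σ ^ k ≤ ∑ j, (Qm ^ k) i0 j := this
    _ = ∑ j, ‖(N ^ k) i0 j‖ := hrow.symm
    _ ≤ ‖N ^ k‖ := rowsum_le_norm _ i0
  -- limits
  have hgel := spectrum.pow_norm_pow_one_div_tendsto_nhds_spectralRadius N
  have hlow : Tendsto (fun k : ℕ => ENNReal.ofReal ((c * σ ^ k) ^ (1 / k : ℝ))) atTop
      (𝓝 (ENNReal.ofReal σ)) := by
    have hreal : Tendsto (fun k : ℕ => (c * σ ^ k) ^ (1 / k : ℝ)) atTop (𝓝 σ) := by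
      have hc1 : Tendsto (fun k : ℕ => c ^ (1 / k : ℝ)) atTop (𝓝 1) := by
        have h0 : Tendsto (fun k : ℕ => (1 / k : ℝ)) atTop (𝓝 0) :=
          tendsto_one_div_atTop_nhds_zero_nat
        have hcont : ContinuousAt (fun t : ℝ => c ^ t) 0 :=
          Real.continuousAt_const_rpow hcpos.ne'
        have := hcont.tendsto.comp h0
        simpa [Function.comp_def] using this
      have heq : ∀ᶠ k : ℕ in atTop, (c * σ ^ k) ^ (1 / k : ℝ) = c ^ (1 / k : ℝ) * σ := by
        filter_upwards [eventually_ge_atTop 1] with k hk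
        have hk0 : (k : ℝ) ≠ 0 := Nat.cast_ne_zero.mpr (Nat.one_le_iff_ne_zero.mp hk)
        rw [Real.mul_rpow hcpos.le (pow_nonneg hσ k), ← Real.rpow_natCast σ k,
          ← Real.rpow_mul hσ]
        field_simp; simp
      have : Tendsto (fun k : ℕ => c ^ (1 / k : ℝ) * σ) atTop (𝓝 (1 * σ)) :=
        hc1.mul_const σ
      rw [one_mul] at this
      exact Tendsto.congr' (heq.mono fun k hk => hk.symm) this
    exact (ENNReal.continuous_ofReal.tendsto σ).comp hreal
  refine le_of_tendsto_of_tendsto hlow hgel ?_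
  filter_upwards with k
  exact ENNReal.ofReal_le_ofReal
    (Real.rpow_le_rpow (by positivity) (hnorm k) (by positivity))


lemma eigenvecExists {M : Matrix (Fin n) (Fin n) ℂ} {μ : ℂ} (h : μ ∈ spectrum ℂ M) :
    ∃ v : Fin n → ℂ, v ≠ 0 ∧ M.mulVec v = μ • v := by
  rw [spectrum.mem_iff] at h
  rw [Matrix.isUnit_iff_isUnit_det, isUnit_iff_ne_zero, not_not,
    ← Matrix.exists_mulVec_eq_zero_iff] at h
  obtain ⟨v, hv0, hv⟩ := h
  refine ⟨v, hv0, ?_⟩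
  have : (algebraMap ℂ (Matrix (Fin n) (Fin n) ℂ)) μ = μ • 1 := by
    simp [Algebra.algebraMap_eq_smul_one]
  rw [this, Matrix.sub_mulVec, Matrix.smul_mulVec, Matrix.one_mulVec, sub_eq_zero] at hv
  exact hv.symm

lemma rowEqGen {F : Type} [Field F] (d' : Fin n → F) (A' : Matrix (Fin n) (Fin n) F)
    {μ : F} {x : Fin n → F} (hx : (Matrix.diagonal d' + A') *ᵥ x = μ • x) (i : Fin n) :
    (μ - d' i) * x i = ∑ j, A' i j * x j := by
  have h := congrFun hx i
  simp only [Matrix.mulVec, dotProduct, Pi.smul_apply, smul_eq_mul] at h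
  have hsplit : ∑ j, (Matrix.diagonal d' + A') i j * x j
      = d' i * x i + ∑ j, A' i j * x j := by
    have hterm : ∀ j, (Matrix.diagonal d' + A') i j * x j
        = (if i = j then d' i * x j else 0) + A' i j * x j := by
      intro j
      by_cases hij : i = j
      · subst hij; simp [Matrix.add_apply, Matrix.diagonal_apply_eq]; ring
      · simp [Matrix.add_apply, Matrix.diagonal_apply_ne _ hij, hij]
    rw [Finset.sum_congr rfl fun j _ => hterm j, Finset.sum_add_distrib,
      Finset.sum_ite_eq Finset.univ i fun j => d' i * x j]
    simp
  rw [hsplit] at h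
  linear_combination -h

lemma mapDiagAdd (d : Fin n → ℝ) (A : Matrix (Fin n) (Fin n) ℝ) :
    (Matrix.diagonal d + A).map Complex.ofReal
      = Matrix.diagonal (fun i => (d i : ℂ)) + A.map Complex.ofReal := by
  rw [Matrix.map_add (f := Complex.ofReal) (fun a b => by push_cast; ring),
    Matrix.diagonal_map (by simp)]

lemma smulMulVec {n : ℕ} (Q : Matrix (Fin n) (Fin n) ℝ) (c : ℝ) (v : Fin n → ℝ) :
    Q *ᵥ (c • v) = c • (Q *ᵥ v) := by
  funext i
  simp only [Matrix.mulVec, dotProduct, Pi.smul_apply, smul_eq_mul, Finset.mul_sum]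
  exact Finset.sum_congr rfl fun j _ => by ring

end Helpers

section MainProof

attribute [local instance] Matrix.linftyOpNormedRing Matrix.linftyOpNormedAlgebra
  Matrix.linftyOpNormedAddCommGroup Matrix.linftyOpNormedSpace

theorem stmt_14 {n : ℕ} (hn : 2 ≤ n) (A : Matrix (Fin n) (Fin n) ℝ)
    (h01 : ∀ i j, A i j = 0 ∨ A i j = 1) (hdiag : ∀ i, A i i = 0) (hirr : MatIrred A)
    (d m : Fin n → ℝ) (hd : ∀ i, d i = ∑ j, A i j)
    (hm : ∀ i, m i = (∑ j, A i j * d j) / d i)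
    (G : Fin n → Fin n → ℝ)
    (hG : ∀ i j, G i j =
      (d i + d j + Real.sqrt ((d i - d j) ^ 2 + 4 * m i * m j)) / 2) :
    sInf {x | ∃ i j, A i j = 1 ∧ x = G i j} ≤ specRad (Matrix.diagonal d + A) ∧
      specRad (Matrix.diagonal d + A) ≤ sSup {x | ∃ i j, A i j = 1 ∧ x = G i j} := by
  have hnpos : 0 < n := lt_of_lt_of_le two_pos hn
  have hne : Nonempty (Fin n) := Fin.pos_iff_nonempty.mp hnpos
  set Q : Matrix (Fin n) (Fin n) ℝ := Matrix.diagonal d + A with hQdef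
  set M : Matrix (Fin n) (Fin n) ℂ := Q.map Complex.ofReal with hM
  -- basic facts
  have hA0 : ∀ i j, 0 ≤ A i j := fun i j => by rcases h01 i j with h | h <;> rw [h] <;> norm_num
  have hrowA : ∀ i, ∃ j, A i j = 1 := by
    intro i
    obtain ⟨k, hk, hki⟩ := hirr i i
    obtain ⟨k', rfl⟩ : ∃ k', k = k' + 1 := ⟨k - 1, (Nat.succ_pred_eq_of_pos hk).symm⟩
    rw [pow_succ', Matrix.mul_apply] at hki
    obtain ⟨j, -, hj⟩ := Finset.exists_ne_zero_of_sum_ne_zero (ne_of_gt hki)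
    have hAij : A i j ≠ 0 := fun h0 => hj (by rw [h0, zero_mul])
    rcases h01 i j with h | h
    · exact absurd h hAij
    · exact ⟨j, h⟩
  have hd1 : ∀ i, 1 ≤ d i := by
    intro i; obtain ⟨j, hj⟩ := hrowA i
    rw [hd i]
    calc (1 : ℝ) = A i j := hj.symm
    _ ≤ ∑ j, A i j := Finset.single_le_sum (fun j _ => hA0 i j) (Finset.mem_univ j)
  have hdpos : ∀ i, (0 : ℝ) < d i := fun i => lt_of_lt_of_le one_pos (hd1 i)
  have hAd : ∀ i, ∑ j, A i j * d j = d i * m i := by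
    intro i; rw [hm i, mul_div_cancel₀ _ (ne_of_gt (hdpos i))]
  have hm1 : ∀ i, 1 ≤ m i := by
    intro i
    rw [hm i, le_div_iff₀ (hdpos i), one_mul]
    nth_rewrite 1 [hd i]
    exact Finset.sum_le_sum fun j _ => (by nlinarith [hA0 i j, hd1 j] : A i j ≤ A i j * d j)
  have hmpos : ∀ i, (0 : ℝ) < m i := fun i => lt_of_lt_of_le one_pos (hm1 i)
  have hQ0 : ∀ i j, 0 ≤ Q i j := by
    intro i j; rw [hQdef, Matrix.add_apply]
    rcases eq_or_ne i j with rfl | hij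
    · rw [Matrix.diagonal_apply_eq]
      have := hdpos i; have := hA0 i i; linarith
    · rw [Matrix.diagonal_apply_ne _ hij]
      have := hA0 i j; linarith
  have hAleQ : ∀ i j, A i j ≤ Q i j := by
    intro i j; rw [hQdef, Matrix.add_apply]
    rcases eq_or_ne i j with rfl | hij
    · rw [Matrix.diagonal_apply_eq]; have := hdpos i; linarith
    · rw [Matrix.diagonal_apply_ne _ hij]; simp
  -- the G-set
  set Gset : Set ℝ := {x | ∃ i j, A i j = 1 ∧ x = G i j} with hGsetdef
  have hGsub : Gset ⊆ Set.range (fun p : Fin n × Fin n => G p.1 p.2) := by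
    rintro x ⟨i, j, -, rfl⟩; exact ⟨(i, j), rfl⟩
  have hGfin : Gset.Finite := Set.Finite.subset (Set.finite_range _) hGsub
  have hGbddA : BddAbove Gset := hGfin.bddAbove
  have hGbddB : BddBelow Gset := hGfin.bddBelow
  -- spectrum facts
  have hspec_ne : (spectrum ℂ M).Nonempty := spectrum.nonempty M
  set S' : Set ℝ := norm '' spectrum ℂ M with hS'def
  have hS'comp : IsCompact S' := (spectrum.isCompact M).image continuous_norm
  have hS'ne : S'.Nonempty := hspec_ne.image _
  have hspecRad : specRad Q = sSup S' := by
    rw [specRad]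
    congr 1
    ext r
    constructor
    · rintro ⟨μ, hμ, rfl⟩; exact ⟨μ, hμ, rfl⟩
    · rintro ⟨μ, hμ, rfl⟩; exact ⟨μ, hμ, rfl⟩
  -- key arc lemma for any eigenvalue
  have keyArc : ∀ μ : ℂ, μ ∈ spectrum ℂ M → ∃ u v, A u v = 1 ∧
      ‖μ - d u‖ * ‖μ - d v‖ ≤ m u * m v := by
    intro μ hμ
    obtain ⟨x, hx0, hx⟩ := eigenvecExists hμ
    have hx' : (Matrix.diagonal (fun i => (d i : ℂ)) + A.map Complex.ofReal) *ᵥ x = μ • x := by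
      rw [← mapDiagAdd]; exact hx
    have hrowC : ∀ i, (μ - d i) * x i = ∑ j, (A i j : ℂ) * x j := fun i => by
      have h := rowEqGen _ _ hx' i
      simpa [Matrix.map_apply] using h
    set a : Fin n → ℝ := fun i => ‖x i / d i‖ with ha
    have ha0 : ∀ i, 0 ≤ a i := fun i => norm_nonneg _
    have key : ∀ i, ‖μ - d i‖ * (d i * a i) ≤ ∑ j, A i j * (d j * a j) := by
      intro i
      have hxa : ∀ j, x j = (d j : ℂ) * (x j / d j) := fun j =>
        (mul_div_cancel₀ (x j) (by exact_mod_cast ne_of_gt (hdpos j))).symm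
      have h1 : (μ - d i) * ((d i : ℂ) * (x i / d i))
          = ∑ j, (A i j : ℂ) * ((d j : ℂ) * (x j / d j)) := by
        rw [← hxa i, hrowC i]
        exact Finset.sum_congr rfl fun j _ => by rw [← hxa j]
      calc ‖μ - d i‖ * (d i * a i)
          = ‖(μ - d i) * ((d i : ℂ) * (x i / d i))‖ := by
            rw [norm_mul, norm_mul, Complex.norm_real, Real.norm_eq_abs,
              abs_of_pos (hdpos i)]
        _ = ‖∑ j, (A i j : ℂ) * ((d j : ℂ) * (x j / d j))‖ := by rw [h1]
        _ ≤ ∑ j, ‖(A i j : ℂ) * ((d j : ℂ) * (x j / d j))‖ :=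
            norm_sum_le _ _
        _ = ∑ j, A i j * (d j * a j) := by
            refine Finset.sum_congr rfl fun j _ => ?_
            rw [norm_mul, norm_mul, Complex.norm_real, Real.norm_eq_abs,
              Complex.norm_real, Real.norm_eq_abs, abs_of_nonneg (hA0 i j), abs_of_pos (hdpos j)]
    obtain ⟨u, -, hu⟩ := Finset.exists_max_image Finset.univ a Finset.univ_nonempty
    have hau : 0 < a u := by
      have hxne : ∃ i, x i ≠ 0 := by
        by_contra hc; push_neg at hc; exact hx0 (funext fun i => hc i)
      obtain ⟨i2, hi2⟩ := hxne
      have h2 : 0 < a i2 := by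
        rw [ha]
        simp only [norm_div, Complex.norm_real, Real.norm_eq_abs]
        exact div_pos (norm_pos_iff.mpr hi2) (by rw [abs_of_pos (hdpos i2)]; exact hdpos i2)
      exact lt_of_lt_of_le h2 (hu i2 (Finset.mem_univ _))
    set s : Finset (Fin n) := Finset.univ.filter (fun j => A u j = 1) with hsdef
    have hs : s.Nonempty := by
      obtain ⟨j, hj⟩ := hrowA u
      exact ⟨j, by simp [hsdef, hj]⟩
    obtain ⟨v, hvs, hv⟩ := Finset.exists_max_image s a hs
    have harc : A u v = 1 := (Finset.mem_filter.mp hvs).2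
    have E1 : ‖μ - d u‖ * a u ≤ m u * a v := by
      have h2 : ∑ j, A u j * (d j * a j) ≤ ∑ j, A u j * (d j * a v) := by
        refine Finset.sum_le_sum fun j _ => ?_
        rcases h01 u j with h | h
        · rw [h]; simp
        · have hjs : j ∈ s := Finset.mem_filter.mpr ⟨Finset.mem_univ _, h⟩
          have h3 := hv j hjs
          rw [h]
          nlinarith [hdpos j]
      have h3 : ∑ j, A u j * (d j * a v) = d u * m u * a v := by
        have : ∀ j, A u j * (d j * a v) = (A u j * d j) * a v := fun j => by ring
        rw [Finset.sum_congr rfl fun j _ => this j, ← Finset.sum_mul, hAd u]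
      have h4 := key u
      rw [h3] at h2
      nlinarith [hdpos u, norm_nonneg (μ - (d u : ℂ))]
    have E2 : ‖μ - d v‖ * a v ≤ m v * a u := by
      have h2 : ∑ j, A v j * (d j * a j) ≤ ∑ j, A v j * (d j * a u) := by
        refine Finset.sum_le_sum fun j _ => ?_
        rcases h01 v j with h | h
        · rw [h]; simp
        · have h3 := hu j (Finset.mem_univ j)
          rw [h]
          nlinarith [hdpos j]
      have h3 : ∑ j, A v j * (d j * a u) = d v * m v * a u := by
        have : ∀ j, A v j * (d j * a u) = (A v j * d j) * a u := fun j => by ring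
        rw [Finset.sum_congr rfl fun j _ => this j, ← Finset.sum_mul, hAd v]
      have h4 := key v
      rw [h3] at h2
      nlinarith [hdpos v, norm_nonneg (μ - (d v : ℂ))]
    refine ⟨u, v, harc, ?_⟩
    rcases (ha0 v).eq_or_lt with hv0 | hv0
    · have h6 : ‖μ - (d u : ℂ)‖ = 0 := by
        by_contra h5
        have hpos : 0 < ‖μ - (d u : ℂ)‖ :=
          (norm_nonneg _).lt_of_ne (Ne.symm h5)
        rw [← hv0, mul_zero] at E1
        nlinarith [E1, mul_pos hpos hau]
      rw [h6, zero_mul]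
      exact mul_nonneg (hmpos u).le (hmpos v).le
    · nlinarith [norm_nonneg (μ - (d u : ℂ)), norm_nonneg (μ - (d v : ℂ)),
        hmpos u, hmpos v]
  -- upper bound
  have hub : specRad Q ≤ sSup Gset := by
    rw [hspecRad]
    refine csSup_le hS'ne ?_
    rintro r ⟨μ, hμ, rfl⟩
    obtain ⟨u, v, harc, hprod⟩ := keyArc μ hμ
    have htu : |‖μ‖ - d u| ≤ ‖μ - d u‖ := by
      calc |‖μ‖ - d u|
          = |‖μ‖ - ‖((d u : ℝ) : ℂ)‖| := by
            rw [Complex.norm_real, Real.norm_eq_abs, abs_of_pos (hdpos u)]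
      _ ≤ ‖μ - d u‖ := abs_norm_sub_norm_le μ _
    have htv : |‖μ‖ - d v| ≤ ‖μ - d v‖ := by
      calc |‖μ‖ - d v|
          = |‖μ‖ - ‖((d v : ℝ) : ℂ)‖| := by
            rw [Complex.norm_real, Real.norm_eq_abs, abs_of_pos (hdpos v)]
      _ ≤ ‖μ - d v‖ := abs_norm_sub_norm_le μ _
    have hprod2 : |‖μ‖ - d u| * |‖μ‖ - d v| ≤ m u * m v :=
      le_trans (mul_le_mul htu htv (abs_nonneg _) (norm_nonneg _)) hprod
    have h7 := quad_upper (hmpos u).le (hmpos v).le hprod2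
    rw [← hG u v] at h7
    exact h7.trans (le_csSup hGbddA ⟨u, v, harc, rfl⟩)
  refine ⟨?_, hub⟩
  -- lower bound : Perron–Frobenius argument
  set ρ : ℝ := specRad Q with hρdef
  have hρmem : ρ ∈ S' := by
    rw [hspecRad]
    exact hS'comp.sSup_mem hS'ne
  obtain ⟨μ0, hμ0, hμ0abs⟩ := hρmem
  have hρ0 : 0 ≤ ρ := hμ0abs ▸ norm_nonneg μ0
  have hρle : ∀ μ ∈ spectrum ℂ M, ‖μ‖ ≤ ρ := by
    intro μ hμ
    rw [hspecRad]
    exact le_csSup hS'comp.bddAbove ⟨μ, hμ, rfl⟩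
  obtain ⟨x, hx0, hx⟩ := eigenvecExists hμ0
  set y : Fin n → ℝ := fun i => ‖x i‖ with hy
  have hy0 : ∀ i, 0 ≤ y i := fun i => norm_nonneg _
  have hyex : ∃ i, 0 < y i := by
    have hxne : ∃ i, x i ≠ 0 := by
      by_contra hc; push_neg at hc; exact hx0 (funext fun i => hc i)
    obtain ⟨i2, hi2⟩ := hxne
    exact ⟨i2, norm_pos_iff.mpr hi2⟩
  have hsub : ∀ i, ρ * y i ≤ (Q *ᵥ y) i := by
    intro i
    calc ρ * y i = ‖μ0 * x i‖ := by rw [norm_mul, hμ0abs]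
      _ = ‖(M *ᵥ x) i‖ := by rw [hx]; simp
      _ = ‖∑ j, ((Q i j : ℝ) : ℂ) * x j‖ := by
          simp [Matrix.mulVec, dotProduct, hM, Matrix.map_apply]
      _ ≤ ∑ j, ‖((Q i j : ℝ) : ℂ) * x j‖ := norm_sum_le _ _
      _ = ∑ j, Q i j * y j := by
          refine Finset.sum_congr rfl fun j _ => ?_
          rw [norm_mul, Complex.norm_real, Real.norm_eq_abs, abs_of_nonneg (hQ0 i j)]
      _ = (Q *ᵥ y) i := by simp [Matrix.mulVec, dotProduct]
  have hQirr : ∀ i j, ∃ k : ℕ, 0 < k ∧ 0 < (Q ^ k) i j := by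
    intro i j
    obtain ⟨k, hk, hki⟩ := hirr i j
    exact ⟨k, hk, lt_of_lt_of_le hki (powMono hA0 hAleQ k i j)⟩
  set kf : Fin n × Fin n → ℕ := fun p => (hQirr p.1 p.2).choose with hkf
  set K : ℕ := Finset.univ.sup kf with hK
  set P : Matrix (Fin n) (Fin n) ℝ := (1 + Q) ^ K with hP
  have hPpos : ∀ i j, 0 < P i j := by
    intro i j
    have h1 := (hQirr i j).choose_spec.2
    have h2 : kf (i, j) ≤ K := Finset.le_sup (f := kf) (Finset.mem_univ (i, j))
    exact lt_of_lt_of_le h1 (oneAddPow hQ0 K (kf (i, j)) h2 i j)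
  have hPv : ∀ v : Fin n → ℝ, (∀ i, 0 ≤ v i) → (∃ i, 0 < v i) → ∀ i, 0 < (P *ᵥ v) i := by
    rintro v hv ⟨i0, hi0⟩ i
    have h1 : ∀ j ∈ Finset.univ, 0 ≤ P i j * v j := fun j _ =>
      mul_nonneg (hPpos i j).le (hv j)
    have h2 : P i i0 * v i0 ≤ ∑ j, P i j * v j :=
      Finset.single_le_sum h1 (Finset.mem_univ i0)
    have h3 : 0 < P i i0 * v i0 := mul_pos (hPpos i i0) hi0
    simpa [Matrix.mulVec, dotProduct] using lt_of_lt_of_le h3 h2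
  have hc : Commute Q P := by
    rw [hP]
    exact (Commute.add_right (Commute.one_right Q) (Commute.refl Q)).pow_right K
  have hPer : Q *ᵥ y = ρ • y := by
    by_contra hne'
    set z : Fin n → ℝ := fun i => (Q *ᵥ y) i - ρ * y i with hz
    have hz0 : ∀ i, 0 ≤ z i := fun i => by rw [hz]; simp; linarith [hsub i]
    have hzex : ∃ i, 0 < z i := by
      by_contra hcon; push_neg at hcon
      refine hne' (funext fun i => ?_)
      have h1 : z i = 0 := le_antisymm (hcon i) (hz0 i)
      rw [hz] at h1
      simp only [Pi.smul_apply, smul_eq_mul]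
      simp at h1
      linarith
    set w : Fin n → ℝ := P *ᵥ y with hw
    have hwpos : ∀ i, 0 < w i := hPv y hy0 hyex
    have hQyz : Q *ᵥ y = ρ • y + z := by
      funext i
      simp only [hz, Pi.add_apply, Pi.smul_apply, smul_eq_mul]
      ring
    have hQw : ∀ i, (Q *ᵥ w) i = ρ * w i + (P *ᵥ z) i := by
      intro i
      have h1 : Q *ᵥ w = P *ᵥ (ρ • y + z) := by
        rw [hw, Matrix.mulVec_mulVec, hc.eq, ← Matrix.mulVec_mulVec, hQyz]
      rw [h1, Matrix.mulVec_add, smulMulVec]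
      simp only [Pi.add_apply, Pi.smul_apply, smul_eq_mul]
      rfl
    obtain ⟨u0, -, hu0⟩ := Finset.exists_min_image Finset.univ
      (fun i => (Q *ᵥ w) i / w i) Finset.univ_nonempty
    set σ : ℝ := (Q *ᵥ w) u0 / w u0 with hσ
    have hρσ : ρ < σ := by
      rw [hσ, lt_div_iff₀ (hwpos u0), hQw u0]
      have := hPv z hz0 hzex u0
      linarith
    have hσw : ∀ i, σ * w i ≤ (Q *ᵥ w) i := by
      intro i
      have h1 : σ ≤ (Q *ᵥ w) i / w i := hu0 i (Finset.mem_univ i)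
      rw [le_div_iff₀ (hwpos i)] at h1
      linarith
    have hlow := specLower hnpos hQ0 hwpos (le_trans hρ0 hρσ.le) hσw
    have hup := specUpperBound hρle
    have hcontra : σ ≤ ρ := (ENNReal.ofReal_le_ofReal_iff hρ0).mp (le_trans hlow hup)
    linarith
  -- positivity of the Perron vector
  have hyK : ∀ t : ℕ, ((1 + Q) ^ t) *ᵥ y = ((1 + ρ) ^ t) • y := by
    intro t
    induction t with
    | zero => simp [Matrix.one_mulVec]
    | succ t ih =>
      have h1 : ((1 + Q) ^ (t + 1)) *ᵥ y = (1 + Q) *ᵥ (((1 + Q) ^ t) *ᵥ y) := by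
        rw [Matrix.mulVec_mulVec, ← pow_succ']
      rw [h1, ih, smulMulVec, Matrix.add_mulVec, Matrix.one_mulVec, hPer]
      funext i
      simp only [Pi.smul_apply, Pi.add_apply, smul_eq_mul]
      ring
  have hypos : ∀ i, 0 < y i := by
    intro i
    have h1 := hPv y hy0 hyex i
    rw [hP, hyK K] at h1
    simp only [Pi.smul_apply, smul_eq_mul] at h1
    nlinarith [pow_nonneg (by linarith : (0:ℝ) ≤ 1 + ρ) K, h1]
  have hrowR : ∀ i, (ρ - d i) * y i = ∑ j, A i j * y j := fun i =>
    rowEqGen d A hPer i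
  have hρd : ∀ i, d i < ρ := by
    intro i
    obtain ⟨j0, hj0⟩ := hrowA i
    have h1 : y j0 ≤ ∑ j, A i j * y j := by
      calc y j0 = A i j0 * y j0 := by rw [hj0, one_mul]
        _ ≤ ∑ j, A i j * y j := Finset.single_le_sum
            (fun j _ => mul_nonneg (hA0 i j) (hy0 j)) (Finset.mem_univ j0)
    have h2 := hrowR i
    nlinarith [hypos i, hypos j0]
  set Y : Fin n → ℝ := fun i => y i / d i with hY
  have hYpos : ∀ i, 0 < Y i := fun i => div_pos (hypos i) (hdpos i)
  have hyY : ∀ i, y i = d i * Y i := fun i => by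
    rw [hY]
    rw [mul_comm, div_mul_cancel₀ _ (ne_of_gt (hdpos i))]
  have hrowY : ∀ i, (ρ - d i) * (d i * Y i) = ∑ j, A i j * (d j * Y j) := by
    intro i
    rw [← hyY i, hrowR i]
    exact Finset.sum_congr rfl fun j _ => by rw [← hyY j]
  obtain ⟨u, -, hu⟩ := Finset.exists_min_image Finset.univ Y Finset.univ_nonempty
  set s2 : Finset (Fin n) := Finset.univ.filter (fun j => A u j = 1) with hs2
  have hs2ne : s2.Nonempty := by
    obtain ⟨j, hj⟩ := hrowA u
    exact ⟨j, by simp [hs2, hj]⟩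
  obtain ⟨v, hvs2, hv⟩ := Finset.exists_min_image s2 Y hs2ne
  have harc : A u v = 1 := (Finset.mem_filter.mp hvs2).2
  have F1 : m u * Y v ≤ (ρ - d u) * Y u := by
    have h2 : ∑ j, A u j * (d j * Y v) ≤ ∑ j, A u j * (d j * Y j) := by
      refine Finset.sum_le_sum fun j _ => ?_
      rcases h01 u j with h | h
      · rw [h]; simp
      · have h3 := hv j (Finset.mem_filter.mpr ⟨Finset.mem_univ _, h⟩)
        rw [h]; nlinarith [hdpos j]
    have h3 : ∑ j, A u j * (d j * Y v) = d u * m u * Y v := by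
      have he : ∀ j, A u j * (d j * Y v) = (A u j * d j) * Y v := fun j => by ring
      rw [Finset.sum_congr rfl fun j _ => he j, ← Finset.sum_mul, hAd u]
    have h4 := hrowY u
    rw [h3] at h2
    nlinarith [hdpos u]
  have F2 : m v * Y u ≤ (ρ - d v) * Y v := by
    have h2 : ∑ j, A v j * (d j * Y u) ≤ ∑ j, A v j * (d j * Y j) := by
      refine Finset.sum_le_sum fun j _ => ?_
      rcases h01 v j with h | h
      · rw [h]; simp
      · have h3 := hu j (Finset.mem_univ j)
        rw [h]; nlinarith [hdpos j]
    have h3 : ∑ j, A v j * (d j * Y u) = d v * m v * Y u := by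
      have he : ∀ j, A v j * (d j * Y u) = (A v j * d j) * Y u := fun j => by ring
      rw [Finset.sum_congr rfl fun j _ => he j, ← Finset.sum_mul, hAd v]
    have h4 := hrowY v
    rw [h3] at h2
    nlinarith [hdpos v]
  have hprod : m u * m v ≤ (ρ - d u) * (ρ - d v) := by
    have hmul := mul_le_mul F1 F2 (mul_nonneg (hmpos v).le (hYpos u).le)
      (mul_nonneg (by linarith [hρd u] : (0:ℝ) ≤ ρ - d u) (hYpos u).le)
    nlinarith [mul_pos (hYpos u) (hYpos v), hmul, hmpos u, hmpos v]
  have hfin := quad_lower (hρd u) (hρd v) hprod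
  rw [← hG u v] at hfin
  exact le_trans (csInf_le hGbddB ⟨u, v, harc, rfl⟩) hfin

end MainProof
end

section
/- Let n ≥ 2 and let 𝒟 = (d_{ij}) be an n×n nonnegative real matrix with d_{ii} = 0 for all i and d_{ij} > 0 for all i ≠ j (for example, the distance matrix of a strongly connected digraph on n vertices). Let D_i^+ = Σ_{j=1}^n d_{ij} and T_i^+ = Σ_{j=1}^n d_{ij} D_j^+. Then min_{1≤i,j≤n} sqrt(T_i^+ T_j^+/(D_i^+ D_j^+)) ≤ ρ(𝒟) ≤ max_{1≤i,j≤n} sqrt(T_i^+ T_j^+/(D_i^+ D_j^+)), where ρ(𝒟) is the spectral radius of 𝒟, and equality holds in either bound if and only if T_1^+/D_1^+ = T_2^+/D_2^+ = … = T_n^+/D_n^+. -/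
open Matrix Filter
open scoped ENNReal NNReal

attribute [local instance] Matrix.linftyOpNormedRing Matrix.linftyOpNormedAlgebra

theorem specRad_exists_spec {n : ℕ} (hn : 0 < n) (A : Matrix (Fin n) (Fin n) ℝ) :
    ∃ μ : ℂ, μ ∈ spectrum ℂ (A.map Complex.ofReal) ∧ specRad A = ‖μ‖ ∧
      (∀ ν ∈ spectrum ℂ (A.map Complex.ofReal), ‖ν‖ ≤ ‖μ‖) ∧
      spectralRadius ℂ (A.map Complex.ofReal) = (‖μ‖₊ : ℝ≥0∞) := by
  haveI : Nonempty (Fin n) := ⟨⟨0, hn⟩⟩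
  haveI : Nontrivial (Matrix (Fin n) (Fin n) ℂ) :=
    inferInstanceAs (Nontrivial (Fin n → Fin n → ℂ))
  obtain ⟨μ, hμ, hrad⟩ := spectrum.exists_nnnorm_eq_spectralRadius (A.map Complex.ofReal)
  have hle : ∀ ν ∈ spectrum ℂ (A.map Complex.ofReal), ‖ν‖ ≤ ‖μ‖ := by
    intro ν hν
    have h1 : (‖ν‖₊ : ℝ≥0∞) ≤ spectralRadius ℂ (A.map Complex.ofReal) :=
      le_iSup₂ (f := fun k (_ : k ∈ spectrum ℂ (A.map Complex.ofReal)) => (‖k‖₊ : ℝ≥0∞)) ν hν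
    rw [← hrad, ENNReal.coe_le_coe] at h1
    exact NNReal.coe_le_coe.mpr h1
  refine ⟨μ, hμ, ?_, hle, hrad.symm⟩
  have hmem : ‖μ‖ ∈
      {x : ℝ | ∃ ν : ℂ, ν ∈ spectrum ℂ (A.map Complex.ofReal) ∧ x = ‖ν‖} :=
    ⟨μ, hμ, rfl⟩
  have hub : ∀ x ∈ {x : ℝ | ∃ ν : ℂ, ν ∈ spectrum ℂ (A.map Complex.ofReal) ∧ x = ‖ν‖},
      x ≤ ‖μ‖ := by rintro x ⟨ν, hν, rfl⟩; exact hle ν hν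
  exact le_antisymm (csSup_le ⟨_, hmem⟩ hub) (le_csSup ⟨_, hub⟩ hmem)

theorem abs_le_of_mulVec_le {n : ℕ} {A : Matrix (Fin n) (Fin n) ℝ}
    (hA : ∀ i j, 0 ≤ A i j) {y : Fin n → ℝ} (hy : ∀ i, 0 < y i) {R : ℝ}
    (hR : ∀ i, A.mulVec y i ≤ R * y i) :
    ∀ μ ∈ spectrum ℂ (A.map Complex.ofReal), ‖μ‖ ≤ R := by
  intro μ hμ
  rw [← AlgEquiv.spectrum_eq
    (Matrix.toLinAlgEquiv' : Matrix (Fin n) (Fin n) ℂ ≃ₐ[ℂ] _) (A.map Complex.ofReal),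
    ← Module.End.hasEigenvalue_iff_mem_spectrum] at hμ
  obtain ⟨v, hv⟩ := hμ.exists_hasEigenvector
  have hv0 : v ≠ 0 := hv.right
  have heig : ∀ i, (A.map Complex.ofReal).mulVec v i = μ * v i := by
    intro i
    have := hv.apply_eq_smul
    rw [Matrix.toLinAlgEquiv'_apply] at this
    exact congrFun this i
  obtain ⟨j₀, hj₀⟩ := Function.ne_iff.mp hv0
  obtain ⟨i₀, -, hmax⟩ := Finset.exists_max_image Finset.univ
    (fun i => ‖v i‖ / y i) ⟨j₀, Finset.mem_univ j₀⟩
  set c : ℝ := ‖v i₀‖ / y i₀ with hc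
  have hci : ∀ i, ‖v i‖ ≤ c * y i := fun i =>
    (div_le_iff₀ (hy i)).mp (hmax i (Finset.mem_univ i))
  have hcpos : 0 < c := by
    have h1 : 0 < ‖v j₀‖ / y j₀ :=
      div_pos (by simpa using hj₀) (hy j₀)
    exact lt_of_lt_of_le h1 (hmax j₀ (Finset.mem_univ j₀))
  have hattain : ‖v i₀‖ = c * y i₀ := by
    rw [hc, div_mul_cancel₀ _ (hy i₀).ne']
  have key : ‖μ‖ * (c * y i₀) ≤ R * (c * y i₀) := by
    calc ‖μ‖ * (c * y i₀) = ‖μ‖ * ‖v i₀‖ := by rw [hattain]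
    _ = ‖μ * v i₀‖ := (norm_mul _ _).symm
    _ = ‖(A.map Complex.ofReal).mulVec v i₀‖ := by rw [heig]
    _ = ‖∑ j, (A i₀ j : ℂ) * v j‖ := by
        simp [Matrix.mulVec, dotProduct, Matrix.map_apply]
    _ ≤ ∑ j, ‖(A i₀ j : ℂ) * v j‖ := norm_sum_le _ _
    _ = ∑ j, A i₀ j * ‖v j‖ := by
        refine Finset.sum_congr rfl fun j _ => ?_
        rw [norm_mul, Complex.norm_real, Real.norm_of_nonneg (hA i₀ j)]
    _ ≤ ∑ j, A i₀ j * (c * y j) := by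
        refine Finset.sum_le_sum fun j _ => mul_le_mul_of_nonneg_left (hci j) (hA i₀ j)
    _ = c * A.mulVec y i₀ := by
        simp only [Matrix.mulVec, dotProduct, Finset.mul_sum]
        exact Finset.sum_congr rfl fun j _ => by ring
    _ ≤ c * (R * y i₀) := mul_le_mul_of_nonneg_left (hR i₀) hcpos.le
    _ = R * (c * y i₀) := by ring
  exact le_of_mul_le_mul_right key (mul_pos hcpos (hy i₀))

-- entries of powers of entrywise-nonneg matrices are nonneg
theorem pow_entry_nonneg {n : ℕ} {A : Matrix (Fin n) (Fin n) ℝ}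
    (hA : ∀ i j, 0 ≤ A i j) : ∀ (k : ℕ) i j, 0 ≤ (A ^ k) i j := by
  intro k
  induction k with
  | zero => intro i j; by_cases h : i = j <;> simp [pow_zero, Matrix.one_apply, h]
  | succ k ih =>
    intro i j
    rw [pow_succ, Matrix.mul_apply]
    exact Finset.sum_nonneg fun l _ => mul_nonneg (ih i l) (hA l j)

theorem mulVec_pow_le {n : ℕ} {A : Matrix (Fin n) (Fin n) ℝ}
    (hA : ∀ i j, 0 ≤ A i j) {y : Fin n → ℝ} (hy : ∀ i, 0 < y i) {m : ℝ} (hm0 : 0 ≤ m)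
    (hm : ∀ i, m * y i ≤ A.mulVec y i) :
    ∀ (k : ℕ) i, m ^ k * y i ≤ (A ^ k).mulVec y i := by
  intro k
  induction k with
  | zero => intro i; simp [Matrix.one_mulVec]
  | succ k ih =>
    intro i
    have h1 : (A ^ (k + 1)).mulVec y i = A.mulVec ((A ^ k).mulVec y) i := by
      rw [pow_succ', ← Matrix.mulVec_mulVec]
    rw [h1]
    have h2 : m ^ k * (A.mulVec y i) ≤ A.mulVec ((A ^ k).mulVec y) i := by
      simp only [Matrix.mulVec, dotProduct, Finset.mul_sum]
      refine Finset.sum_le_sum fun j _ => ?_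
      have := mul_le_mul_of_nonneg_left (ih j) (hA i j)
      calc m ^ k * (A i j * y j) = A i j * (m ^ k * y j) := by ring
      _ ≤ _ := by simpa [Matrix.mulVec, dotProduct, Finset.mul_sum] using this
    calc m ^ (k + 1) * y i = m ^ k * (m * y i) := by ring
    _ ≤ m ^ k * A.mulVec y i := by
        exact mul_le_mul_of_nonneg_left (hm i) (pow_nonneg hm0 k)
    _ ≤ _ := h2

theorem le_specRad_of_mulVec_le {n : ℕ} (hn : 0 < n) {A : Matrix (Fin n) (Fin n) ℝ}
    (hA : ∀ i j, 0 ≤ A i j) {y : Fin n → ℝ} (hy : ∀ i, 0 < y i) {m : ℝ}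
    (hm : ∀ i, m * y i ≤ A.mulVec y i) : m ≤ specRad A := by
  haveI : Nonempty (Fin n) := ⟨⟨0, hn⟩⟩
  obtain ⟨μ, hμmem, hμ, hle, hrad⟩ := specRad_exists_spec hn A
  rw [hμ]
  rcases le_or_gt m 0 with h | hmpos
  · exact h.trans (norm_nonneg μ)
  -- now m > 0
  have habs : 0 ≤ ‖μ‖ := norm_nonneg μ
  by_contra hcon
  push_neg at hcon
  obtain ⟨θ, hθ1, hθ2⟩ := exists_between hcon
  have hθ0 : 0 ≤ θ := habs.trans hθ1.le
  -- setup constants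
  set yc : Fin n → ℂ := fun i => (y i : ℂ) with hyc
  have hycne : yc ≠ 0 := by
    intro h
    have := congrFun h (Classical.arbitrary (Fin n))
    simp only [hyc, Pi.zero_apply, Complex.ofReal_eq_zero] at this
    exact (hy _).ne' this
  have hN : 0 < ‖yc‖ := norm_pos_iff.mpr hycne
  obtain ⟨i₁, -, hymin⟩ := Finset.exists_min_image Finset.univ y ⟨Classical.arbitrary (Fin n),
    Finset.mem_univ _⟩
  set C : ℝ := y i₁ / ‖yc‖ with hC
  have hCpos : 0 < C := div_pos (hy i₁) hN
  -- power map
  have hpowmap : ∀ k : ℕ, (A.map Complex.ofReal) ^ k = (A ^ k).map Complex.ofReal := by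
    intro k
    have := map_pow (Complex.ofRealHom.mapMatrix) A k
    simp only [RingHom.mapMatrix_apply] at this
    exact this.symm
  -- norm lower bound
  have hnorm : ∀ k : ℕ, m ^ k * C ≤ ‖(A.map Complex.ofReal) ^ k‖ := by
    intro k
    have h1 : m ^ k * y i₁ ≤ (A ^ k).mulVec y i₁ :=
      mulVec_pow_le hA hy hmpos.le hm k i₁
    have h2 : ((A ^ k).map Complex.ofReal).mulVec yc i₁ = (((A ^ k).mulVec y i₁ : ℝ) : ℂ) := by
      simp [Matrix.mulVec, dotProduct, hyc, Matrix.map_apply]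
    have h3 : (A ^ k).mulVec y i₁ ≤ ‖((A ^ k).map Complex.ofReal).mulVec yc‖ := by
      calc (A ^ k).mulVec y i₁ ≤ ‖(((A ^ k).mulVec y i₁ : ℝ) : ℂ)‖ := by
            rw [Complex.norm_real]; exact le_abs_self _
      _ = ‖((A ^ k).map Complex.ofReal).mulVec yc i₁‖ := by rw [h2]
      _ ≤ ‖((A ^ k).map Complex.ofReal).mulVec yc‖ := norm_le_pi_norm _ i₁
    have h4 : ‖((A ^ k).map Complex.ofReal).mulVec yc‖ ≤ ‖(A ^ k).map Complex.ofReal‖ * ‖yc‖ :=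
      Matrix.linfty_opNorm_mulVec _ _
    rw [hpowmap k]
    have h5 : m ^ k * y i₁ ≤ ‖(A ^ k).map Complex.ofReal‖ * ‖yc‖ := le_trans h1 (h3.trans h4)
    rw [hC, ← mul_div_assoc]
    exact (div_le_iff₀ hN).mpr h5
  -- Gelfand
  have hgel := spectrum.pow_norm_pow_one_div_tendsto_nhds_spectralRadius (A.map Complex.ofReal)
  have hev : ∀ᶠ k : ℕ in atTop, ENNReal.ofReal θ ≤
      ENNReal.ofReal (‖(A.map Complex.ofReal) ^ k‖ ^ (1 / (k : ℝ))) := by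
    have hratio : θ / m < 1 := (div_lt_one hmpos).mpr hθ2
    have hratio0 : 0 ≤ θ / m := div_nonneg hθ0 hmpos.le
    have htend : Tendsto (fun k : ℕ => (θ / m) ^ k) atTop (nhds 0) :=
      tendsto_pow_atTop_nhds_zero_of_lt_one hratio0 hratio
    have hevent : ∀ᶠ k : ℕ in atTop, (θ / m) ^ k < C :=
      htend.eventually (gt_mem_nhds hCpos)
    filter_upwards [hevent, Filter.eventually_ge_atTop 1] with k hk hk1
    have hk0 : (k : ℝ) ≠ 0 := Nat.cast_ne_zero.mpr (by omega)
    have hθk : θ ^ k ≤ ‖(A.map Complex.ofReal) ^ k‖ := by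
      have : θ ^ k = (θ / m) ^ k * m ^ k := by
        rw [div_pow, div_mul_eq_mul_div, mul_div_assoc, div_self (pow_ne_zero k hmpos.ne'),
          mul_one]
      rw [this]
      calc (θ / m) ^ k * m ^ k ≤ C * m ^ k :=
            mul_le_mul_of_nonneg_right hk.le (pow_nonneg hmpos.le k)
      _ = m ^ k * C := by ring
      _ ≤ _ := hnorm k
    have hθle : θ ≤ ‖(A.map Complex.ofReal) ^ k‖ ^ (1 / (k : ℝ)) := by
      have h1 : θ = (θ ^ k) ^ (1 / (k : ℝ)) := by
        rw [← Real.rpow_natCast θ k, ← Real.rpow_mul hθ0, mul_one_div, div_self hk0,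
          Real.rpow_one]
      rw [h1]
      exact Real.rpow_le_rpow (pow_nonneg hθ0 k) hθk (by positivity)
    exact ENNReal.ofReal_le_ofReal hθle
  have hfin : ENNReal.ofReal θ ≤ spectralRadius ℂ (A.map Complex.ofReal) :=
    ge_of_tendsto hgel hev
  rw [hrad, ← ENNReal.ofReal_coe_nnreal] at hfin
  have : θ ≤ ‖μ‖ := (ENNReal.ofReal_le_ofReal_iff (norm_nonneg μ)).mp hfin
  exact absurd (lt_of_le_of_lt this hθ1) (lt_irrefl _)

theorem stmt_16 {n : ℕ} (hn : 2 ≤ n) (𝒟 : Matrix (Fin n) (Fin n) ℝ)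
    (hdiag : ∀ i, 𝒟 i i = 0) (hpos : ∀ i j, i ≠ j → 0 < 𝒟 i j)
    (D T : Fin n → ℝ)
    (hD : ∀ i, D i = ∑ j, 𝒟 i j)
    (hT : ∀ i, T i = ∑ j, 𝒟 i j * D j) :
    (sInf {x | ∃ i j, x = Real.sqrt (T i * T j / (D i * D j))} ≤ specRad 𝒟 ∧
      specRad 𝒟 ≤ sSup {x | ∃ i j, x = Real.sqrt (T i * T j / (D i * D j))}) ∧
    ((specRad 𝒟 = sInf {x | ∃ i j, x = Real.sqrt (T i * T j / (D i * D j))} ∨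
      specRad 𝒟 = sSup {x | ∃ i j, x = Real.sqrt (T i * T j / (D i * D j))}) ↔
      ∀ i j, T i / D i = T j / D j) := by
  have hn0 : 0 < n := by omega
  haveI : Nonempty (Fin n) := ⟨⟨0, hn0⟩⟩
  haveI : Nontrivial (Fin n) := Fin.nontrivial_iff_two_le.mpr hn
  have hA : ∀ i j, 0 ≤ 𝒟 i j := by
    intro i j
    by_cases h : i = j
    · subst h; simp [hdiag]
    · exact (hpos i j h).le
  have hD0 : ∀ i, 0 < D i := by
    intro i
    obtain ⟨j, hj⟩ := exists_ne i
    rw [hD i]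
    exact Finset.sum_pos' (fun k _ => hA i k)
      ⟨j, Finset.mem_univ j, hpos i j (Ne.symm hj)⟩
  have hT0 : ∀ i, 0 < T i := by
    intro i
    obtain ⟨j, hj⟩ := exists_ne i
    rw [hT i]
    exact Finset.sum_pos' (fun k _ => mul_nonneg (hA i k) (hD0 k).le)
      ⟨j, Finset.mem_univ j, mul_pos (hpos i j (Ne.symm hj)) (hD0 j)⟩
  set r : Fin n → ℝ := fun i => T i / D i with hrdef
  have hr0 : ∀ i, 0 < r i := fun i => div_pos (hT0 i) (hD0 i)
  have hTr : ∀ i, T i = r i * D i := fun i =>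
    (div_mul_cancel₀ (T i) (hD0 i).ne').symm
  have hmv : ∀ i, 𝒟.mulVec D i = T i := fun i => by
    simp [Matrix.mulVec, dotProduct, hT i]
  obtain ⟨im, -, hmin⟩ := Finset.exists_min_image Finset.univ r
    ⟨Classical.arbitrary _, Finset.mem_univ _⟩
  obtain ⟨iM, -, hmax⟩ := Finset.exists_max_image Finset.univ r
    ⟨Classical.arbitrary _, Finset.mem_univ _⟩
  set S : Set ℝ := {x | ∃ i j, x = Real.sqrt (T i * T j / (D i * D j))} with hSdef
  have hsqrt : ∀ i j, Real.sqrt (T i * T j / (D i * D j)) = Real.sqrt (r i * r j) := by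
    intro i j
    congr 1
    rw [hrdef]
    rw [div_mul_div_comm]
  have hmemS : ∀ i, r i ∈ S := by
    intro i
    refine ⟨i, i, ?_⟩
    rw [hsqrt i i, Real.sqrt_mul_self (hr0 i).le]
  have hlbS : ∀ x ∈ S, r im ≤ x := by
    rintro x ⟨i, j, rfl⟩
    rw [hsqrt i j]
    calc r im = Real.sqrt (r im * r im) := (Real.sqrt_mul_self (hr0 im).le).symm
    _ ≤ Real.sqrt (r i * r j) := Real.sqrt_le_sqrt
        (mul_le_mul (hmin i (Finset.mem_univ i)) (hmin j (Finset.mem_univ j))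
          (hr0 im).le (hr0 i).le)
  have hubS : ∀ x ∈ S, x ≤ r iM := by
    rintro x ⟨i, j, rfl⟩
    rw [hsqrt i j]
    calc Real.sqrt (r i * r j) ≤ Real.sqrt (r iM * r iM) := Real.sqrt_le_sqrt
          (mul_le_mul (hmax i (Finset.mem_univ i)) (hmax j (Finset.mem_univ j))
            (hr0 j).le (hr0 iM).le)
    _ = r iM := Real.sqrt_mul_self (hr0 iM).le
  have hInf : sInf S = r im :=
    le_antisymm (csInf_le ⟨r im, hlbS⟩ (hmemS im)) (le_csInf ⟨_, hmemS im⟩ hlbS)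
  have hSup : sSup S = r iM :=
    le_antisymm (csSup_le ⟨_, hmemS iM⟩ hubS) (le_csSup ⟨r iM, hubS⟩ (hmemS iM))
  -- the two bounds
  have hub_spec : specRad 𝒟 ≤ r iM := by
    obtain ⟨μ, hμmem, hμeq, -, -⟩ := specRad_exists_spec hn0 𝒟
    rw [hμeq]
    refine abs_le_of_mulVec_le hA hD0 (fun i => ?_) μ hμmem
    rw [hmv i, hTr i]
    exact mul_le_mul_of_nonneg_right (hmax i (Finset.mem_univ i)) (hD0 i).le
  have hlb_spec : r im ≤ specRad 𝒟 := by
    refine le_specRad_of_mulVec_le hn0 hA hD0 (fun i => ?_)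
    rw [hmv i, hTr i]
    exact mul_le_mul_of_nonneg_right (hmin i (Finset.mem_univ i)) (hD0 i).le
  refine ⟨⟨hInf ▸ hlb_spec, hSup ▸ hub_spec⟩, ?_, ?_⟩
  · -- equality implies all ratios equal
    intro h
    suffices hclaim : ∀ i, r i = r im by
      intro i j; exact (hclaim i).trans (hclaim j).symm
    by_contra hcon
    push_neg at hcon
    obtain ⟨i₁, hi₁⟩ := hcon
    have hi₁' : r im < r i₁ := lt_of_le_of_ne (hmin i₁ (Finset.mem_univ i₁)) (Ne.symm hi₁)
    have himM : r im < r iM := lt_of_lt_of_le hi₁' (hmax i₁ (Finset.mem_univ i₁))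
    -- the auxiliary positive matrix B and vector y
    set B : Matrix (Fin n) (Fin n) ℝ := 𝒟 + 𝒟 * 𝒟 with hBdef
    have hBpos : ∀ i j, 0 < B i j := by
      intro i j
      have hsq : 0 ≤ (𝒟 * 𝒟) i j := by
        rw [Matrix.mul_apply]
        exact Finset.sum_nonneg fun k _ => mul_nonneg (hA i k) (hA k j)
      by_cases h : i = j
      · subst h
        obtain ⟨k, hk⟩ := exists_ne i
        have hsq' : 0 < (𝒟 * 𝒟) i i := by
          rw [Matrix.mul_apply]
          exact Finset.sum_pos' (fun l _ => mul_nonneg (hA i l) (hA l i))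
            ⟨k, Finset.mem_univ k, mul_pos (hpos i k (Ne.symm hk)) (hpos k i hk)⟩
        simp only [hBdef, Matrix.add_apply, hdiag i, zero_add]
        exact hsq'
      · simp only [hBdef, Matrix.add_apply]
        exact add_pos_of_pos_of_nonneg (hpos i j h) hsq
    set y : Fin n → ℝ := B.mulVec D with hydef
    have hy : ∀ i, 0 < y i := by
      intro i
      rw [hydef]
      simp only [Matrix.mulVec, dotProduct]
      exact Finset.sum_pos (fun j _ => mul_pos (hBpos i j) (hD0 j)) Finset.univ_nonempty
    have hcomm : 𝒟 * B = B * 𝒟 := by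
      rw [hBdef, mul_add, add_mul, mul_assoc]
    have hkey : ∀ (s : ℝ) (i), 𝒟.mulVec y i - s * y i = ∑ j, B i j * (T j - s * D j) := by
      intro s i
      have hDT : 𝒟 *ᵥ D = T := funext hmv
      have h1 : 𝒟.mulVec y = B.mulVec T := by
        rw [hydef, Matrix.mulVec_mulVec, hcomm, ← Matrix.mulVec_mulVec, hDT]
      rw [h1]
      have h2 : s * y i = ∑ j, B i j * (s * D j) := by
        rw [hydef]
        simp only [Matrix.mulVec, dotProduct, Finset.mul_sum]
        exact Finset.sum_congr rfl fun j _ => by ring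
      have h3 : B.mulVec T i = ∑ j, B i j * T j := by
        simp [Matrix.mulVec, dotProduct]
      rw [h3, h2, ← Finset.sum_sub_distrib]
      exact Finset.sum_congr rfl fun j _ => by ring
    rcases h with h | h
    · -- specRad = sInf S = r im, derive contradiction
      have hstrict : ∀ i, r im * y i < 𝒟.mulVec y i := by
        intro i
        have h1 : 0 < ∑ j, B i j * (T j - r im * D j) := by
          refine Finset.sum_pos' (fun j _ => ?_) ⟨i₁, Finset.mem_univ i₁, ?_⟩
          · refine mul_nonneg (hBpos i j).le ?_
            rw [hTr j]
            have : r im * D j ≤ r j * D j :=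
              mul_le_mul_of_nonneg_right (hmin j (Finset.mem_univ j)) (hD0 j).le
            linarith
          · refine mul_pos (hBpos i i₁) ?_
            rw [hTr i₁]
            have : r im * D i₁ < r i₁ * D i₁ := (mul_lt_mul_iff_of_pos_right (hD0 i₁)).mpr hi₁'
            linarith
        have := hkey (r im) i
        linarith
      obtain ⟨i0, -, hmin2⟩ := Finset.exists_min_image Finset.univ
        (fun i => 𝒟.mulVec y i / y i) ⟨Classical.arbitrary _, Finset.mem_univ _⟩
      set m' : ℝ := 𝒟.mulVec y i0 / y i0 with hm'def
      have hm' : ∀ i, m' * y i ≤ 𝒟.mulVec y i := fun i => by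
        have := hmin2 i (Finset.mem_univ i)
        calc m' * y i ≤ (𝒟.mulVec y i / y i) * y i :=
              mul_le_mul_of_nonneg_right this (hy i).le
        _ = 𝒟.mulVec y i := div_mul_cancel₀ _ (hy i).ne'
      have hm'gt : r im < m' := by
        have h1 : r im * y i0 < 𝒟.mulVec y i0 := hstrict i0
        have h2 : m' * y i0 = 𝒟.mulVec y i0 := div_mul_cancel₀ _ (hy i0).ne'
        have := h2 ▸ h1
        exact (mul_lt_mul_iff_of_pos_right (hy i0)).mp this
      have hlow : m' ≤ specRad 𝒟 := le_specRad_of_mulVec_le hn0 hA hy hm'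
      rw [h, hInf] at hlow
      exact absurd (lt_of_lt_of_le hm'gt hlow) (lt_irrefl _)
    · -- specRad = sSup S = r iM, derive contradiction
      have hstrict : ∀ i, 𝒟.mulVec y i < r iM * y i := by
        intro i
        have h1 : 0 < ∑ j, B i j * (r iM * D j - T j) := by
          refine Finset.sum_pos' (fun j _ => ?_) ⟨im, Finset.mem_univ im, ?_⟩
          · refine mul_nonneg (hBpos i j).le ?_
            rw [hTr j]
            have : r j * D j ≤ r iM * D j :=
              mul_le_mul_of_nonneg_right (hmax j (Finset.mem_univ j)) (hD0 j).le
            linarith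
          · refine mul_pos (hBpos i im) ?_
            rw [hTr im]
            have : r im * D im < r iM * D im := (mul_lt_mul_iff_of_pos_right (hD0 im)).mpr himM
            linarith
        have h2 := hkey (r iM) i
        have h3 : ∑ j, B i j * (T j - r iM * D j) = -∑ j, B i j * (r iM * D j - T j) := by
          rw [← Finset.sum_neg_distrib]
          exact Finset.sum_congr rfl fun j _ => by ring
        rw [h3] at h2
        linarith
      obtain ⟨i0, -, hmax2⟩ := Finset.exists_max_image Finset.univ
        (fun i => 𝒟.mulVec y i / y i) ⟨Classical.arbitrary _, Finset.mem_univ _⟩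
      set R' : ℝ := 𝒟.mulVec y i0 / y i0 with hR'def
      have hR' : ∀ i, 𝒟.mulVec y i ≤ R' * y i := fun i => by
        have := hmax2 i (Finset.mem_univ i)
        calc 𝒟.mulVec y i = (𝒟.mulVec y i / y i) * y i := (div_mul_cancel₀ _ (hy i).ne').symm
        _ ≤ R' * y i := mul_le_mul_of_nonneg_right this (hy i).le
      have hR'lt : R' < r iM := by
        have h1 : 𝒟.mulVec y i0 < r iM * y i0 := hstrict i0
        have h2 : R' * y i0 = 𝒟.mulVec y i0 := div_mul_cancel₀ _ (hy i0).ne'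
        have := h2 ▸ h1
        exact (mul_lt_mul_iff_of_pos_right (hy i0)).mp this
      have hup : specRad 𝒟 ≤ R' := by
        obtain ⟨μ, hμmem, hμeq, -, -⟩ := specRad_exists_spec hn0 𝒟
        rw [hμeq]
        exact abs_le_of_mulVec_le hA hy hR' μ hμmem
      rw [h, hSup] at hup
      exact absurd (lt_of_le_of_lt hup hR'lt) (lt_irrefl _)
  · -- all ratios equal implies equality
    intro hall
    left
    rw [hInf]
    refine le_antisymm ?_ hlb_spec
    obtain ⟨μ, hμmem, hμeq, -, -⟩ := specRad_exists_spec hn0 𝒟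
    rw [hμeq]
    refine abs_le_of_mulVec_le hA hD0 (fun i => ?_) μ hμmem
    rw [hmv i, hTr i]
    have : r i = r im := hall i im
    rw [this]
end

section
/- Let n ≥ 2 and let 𝒟 = (d_{ij}) be an n×n nonnegative real matrix with d_{ii} = 0 for all i and d_{ij} > 0 for all i ≠ j (for example, the distance matrix of a strongly connected digraph on n vertices). Let D_i^+ = Σ_{j=1}^n d_{ij}, T_i^+ = Σ_{j=1}^n d_{ij} D_j^+, and let 𝒬 = diag(D_1^+,…,D_n^+) + 𝒟 with spectral radius q = ρ(𝒬). For indices i,j set H(i,j) = (D_i^+ + D_j^+ + sqrt((D_i^+ − D_j^+)^2 + 4 T_i^+ T_j^+/(D_i^+ D_j^+)))/2. Then min_{1≤i,j≤n} H(i,j) ≤ q ≤ max_{1≤i,j≤n} H(i,j), and equality holds in either bound if and only if D_i^+ + T_i^+/D_i^+ takes the same value for all i ∈ {1,…,n}. -/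
open Matrix
open scoped ENNReal NNReal

lemma specRad_set_eq {n : ℕ} (B : Matrix (Fin n) (Fin n) ℝ) :
    {x : ℝ | ∃ μ : ℂ, μ ∈ spectrum ℂ (B.map Complex.ofReal) ∧ x = ‖μ‖}
      = (fun μ : ℂ => ‖μ‖) '' spectrum ℂ (B.map Complex.ofReal) := by
  ext x
  exact ⟨fun ⟨μ, h, e⟩ => ⟨μ, h, e.symm⟩, fun ⟨μ, h, e⟩ => ⟨μ, h, e.symm⟩⟩

lemma specRad_set_finite {n : ℕ} (B : Matrix (Fin n) (Fin n) ℝ) :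
    {x : ℝ | ∃ μ : ℂ, μ ∈ spectrum ℂ (B.map Complex.ofReal) ∧ x = ‖μ‖}.Finite := by
  rw [specRad_set_eq]
  exact (Matrix.finite_spectrum _).image _

lemma abs_le_specRad {n : ℕ} (B : Matrix (Fin n) (Fin n) ℝ) {μ : ℂ}
    (h : μ ∈ spectrum ℂ (B.map Complex.ofReal)) : ‖μ‖ ≤ specRad B :=
  le_csSup (specRad_set_finite B).bddAbove ⟨μ, h, rfl⟩

lemma specRad_exists_eigen {n : ℕ} (hn : 0 < n) (B : Matrix (Fin n) (Fin n) ℝ) :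
    ∃ (μ : ℂ) (v : Fin n → ℂ), ‖μ‖ = specRad B ∧ v ≠ 0 ∧
      (B.map Complex.ofReal) *ᵥ v = μ • v := by
  haveI : Nonempty (Fin n) := Fin.pos_iff_nonempty.mp hn
  set Bc := B.map Complex.ofReal with hBc
  have hspec_ne : (spectrum ℂ Bc).Nonempty :=
    spectrum.nonempty_of_isAlgClosed_of_finiteDimensional ℂ Bc
  have hne : {x : ℝ | ∃ μ : ℂ, μ ∈ spectrum ℂ Bc ∧ x = ‖μ‖}.Nonempty := by
    rw [specRad_set_eq]; exact hspec_ne.image _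
  have hmem := hne.csSup_mem (specRad_set_finite B)
  obtain ⟨μ, hμ, hμeq⟩ := hmem
  -- eigenvector
  have hdet : ((algebraMap ℂ (Matrix (Fin n) (Fin n) ℂ)) μ - Bc).det = 0 := by
    have := spectrum.mem_iff.mp hμ
    rw [Matrix.isUnit_iff_isUnit_det, isUnit_iff_ne_zero, not_ne_iff] at this
    exact this
  obtain ⟨v, hv0, hv⟩ := (Matrix.exists_mulVec_eq_zero_iff).mpr hdet
  refine ⟨μ, v, hμeq.symm, hv0, ?_⟩
  rw [Algebra.algebraMap_eq_smul_one, Matrix.sub_mulVec, Matrix.smul_mulVec,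
    Matrix.one_mulVec, sub_eq_zero] at hv
  exact hv.symm

lemma specRad_nonneg {n : ℕ} (hn : 0 < n) (B : Matrix (Fin n) (Fin n) ℝ) : 0 ≤ specRad B := by
  obtain ⟨μ, v, h1, -⟩ := specRad_exists_eigen hn B
  rw [← h1]; exact norm_nonneg _

lemma specRad_mul_self_le {n : ℕ} (hn : 0 < n) (B : Matrix (Fin n) (Fin n) ℝ) :
    specRad (B * B) ≤ specRad B ^ 2 := by
  haveI : Nonempty (Fin n) := Fin.pos_iff_nonempty.mp hn
  have hmap : (B * B).map Complex.ofReal = (B.map Complex.ofReal) ^ 2 := by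
    rw [pow_two]
    exact Matrix.map_mul (f := Complex.ofRealHom)
  rw [specRad]
  apply Real.sSup_le
  · rintro x ⟨ν, hν, rfl⟩
    rw [hmap, spectrum.map_pow_of_pos _ (by norm_num : 0 < 2)] at hν
    obtain ⟨μ, hμ, rfl⟩ := hν
    rw [norm_pow]
    exact pow_le_pow_left₀ (norm_nonneg _) (abs_le_specRad B hμ) 2
  · exact pow_nonneg (specRad_nonneg hn B) 2
lemma specRad_ge {n : ℕ} (hn : 0 < n) (B : Matrix (Fin n) (Fin n) ℝ)
    (hB : ∀ i j, 0 ≤ B i j) (u : Fin n → ℝ) (hu : ∀ i, 0 < u i) (s : ℝ) (hs : 0 ≤ s)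
    (h : ∀ i, s * u i ≤ ∑ j, B i j * u j) : s ≤ specRad B := by
  haveI : Nonempty (Fin n) := Fin.pos_iff_nonempty.mp hn
  letI : SeminormedRing (Matrix (Fin n) (Fin n) ℂ) := Matrix.linftyOpSemiNormedRing
  letI : NormedRing (Matrix (Fin n) (Fin n) ℂ) := Matrix.linftyOpNormedRing
  letI : NormedAlgebra ℂ (Matrix (Fin n) (Fin n) ℂ) := Matrix.linftyOpNormedAlgebra
  set Bc := B.map Complex.ofReal with hBc
  have hpow : ∀ k : ℕ, (∀ i j, 0 ≤ (B ^ k) i j) ∧ ∀ i, s ^ k * u i ≤ ∑ j, (B ^ k) i j * u j := by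
    intro k
    induction k with
    | zero =>
      constructor
      · intro i j
        rw [pow_zero]
        by_cases hij : i = j <;> simp [Matrix.one_apply, hij]
      · intro i
        simp [Matrix.one_apply, ite_mul, Finset.sum_ite_eq]
    | succ k ih =>
      obtain ⟨ih1, ih2⟩ := ih
      have hmul : ∀ i j, (B ^ (k + 1)) i j = ∑ l, B i l * (B ^ k) l j := by
        intro i j
        rw [pow_succ']
        rfl
      constructor
      · intro i j
        rw [hmul]
        exact Finset.sum_nonneg fun l _ => mul_nonneg (hB i l) (ih1 l j)
      · intro i
        have e1 : ∑ j, (B ^ (k + 1)) i j * u j = ∑ l, B i l * ∑ j, (B ^ k) l j * u j := by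
          simp_rw [hmul, Finset.sum_mul, Finset.mul_sum]
          rw [Finset.sum_comm]
          exact Finset.sum_congr rfl fun l _ => Finset.sum_congr rfl fun j _ => by ring
        rw [e1]
        have e2 : ∑ l, B i l * (s ^ k * u l) ≤ ∑ l, B i l * ∑ j, (B ^ k) l j * u j :=
          Finset.sum_le_sum fun l _ => mul_le_mul_of_nonneg_left (ih2 l) (hB i l)
        have e4 : s ^ k * (s * u i) ≤ s ^ k * ∑ j, B i j * u j :=
          mul_le_mul_of_nonneg_left (h i) (pow_nonneg hs k)
        have e5 : s ^ k * ∑ j, B i j * u j = ∑ l, B i l * (s ^ k * u l) := by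
          rw [Finset.mul_sum]
          exact Finset.sum_congr rfl fun l _ => by ring
        have e3 : s ^ (k + 1) * u i = s ^ k * (s * u i) := by ring
        linarith
  obtain ⟨i0⟩ := ‹Nonempty (Fin n)›
  set umax := Finset.univ.sup' Finset.univ_nonempty u with humax
  have humax_le : ∀ j, u j ≤ umax := fun j => Finset.le_sup' u (Finset.mem_univ j)
  have humax_pos : 0 < umax := lt_of_lt_of_le (hu i0) (humax_le i0)
  have hnorm : ∀ k : ℕ, s ^ k * (u i0 / umax) ≤ ‖Bc ^ k‖ := by
    intro k
    have h1 : Bc ^ k = (B ^ k).map Complex.ofReal := by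
      rw [hBc]
      have e : (B.map Complex.ofReal) = (Complex.ofRealHom.mapMatrix :
          Matrix (Fin n) (Fin n) ℝ →+* Matrix (Fin n) (Fin n) ℂ) B := rfl
      rw [e, ← map_pow]
      rfl
    have h2 : ∑ j, (B ^ k) i0 j * u j ≤ umax * ∑ j, (B ^ k) i0 j := by
      rw [Finset.mul_sum]
      exact Finset.sum_le_sum fun j _ => by nlinarith [(hpow k).1 i0 j, humax_le j, hu j]
    have h3 : ∑ j, (B ^ k) i0 j ≤ ‖Bc ^ k‖ := by
      rw [h1, Matrix.linfty_opNorm_def]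
      have hle : (∑ j, ‖((B ^ k).map Complex.ofReal) i0 j‖₊)
          ≤ Finset.univ.sup fun i => ∑ j, ‖((B ^ k).map Complex.ofReal) i j‖₊ :=
        Finset.le_sup (f := fun i => ∑ j, ‖((B ^ k).map Complex.ofReal) i j‖₊) (Finset.mem_univ i0)
      have hcoe := NNReal.coe_le_coe.mpr hle
      rw [NNReal.coe_sum] at hcoe
      refine le_trans (le_of_eq ?_) hcoe
      refine (Finset.sum_congr rfl fun j _ => ?_).symm
      rw [coe_nnnorm, Matrix.map_apply, Complex.norm_real, Real.norm_eq_abs,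
        abs_of_nonneg ((hpow k).1 i0 j)]
    have h4 := (hpow k).2 i0
    rw [mul_div_assoc', div_le_iff₀ humax_pos]
    nlinarith
  have hgel := spectrum.pow_nnnorm_pow_one_div_tendsto_nhds_spectralRadius Bc
  have hsrle : spectralRadius ℂ Bc ≤ ENNReal.ofReal (specRad B) := by
    rw [spectralRadius]
    refine iSup₂_le fun μ hμ => ?_
    have hb : ‖μ‖ ≤ specRad B := abs_le_specRad B hμ
    calc (‖μ‖₊ : ℝ≥0∞) = ENNReal.ofReal ‖μ‖ := (ofReal_norm μ).symm
      _ ≤ _ := ENNReal.ofReal_le_ofReal hb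
  by_contra hcon
  push_neg at hcon
  set t := (specRad B + s) / 2 with ht
  have hq0 : 0 ≤ specRad B := specRad_nonneg hn B
  have ht0 : 0 ≤ t := by rw [ht]; linarith
  have hts : t < s := by rw [ht]; linarith
  have hqt : specRad B < t := by rw [ht]; linarith
  have hspos : 0 < s := lt_of_le_of_lt ht0 hts
  have hratio : Filter.Tendsto (fun k : ℕ => (t / s) ^ k) Filter.atTop (nhds 0) :=
    tendsto_pow_atTop_nhds_zero_of_lt_one (by positivity) (by rw [div_lt_one hspos]; exact hts)
  have hev : ∀ᶠ k : ℕ in Filter.atTop, ENNReal.ofReal t ≤ (‖Bc ^ k‖₊ : ℝ≥0∞) ^ (1 / (k : ℝ)) := by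
    have hev1 : ∀ᶠ k in Filter.atTop, (t / s) ^ k < u i0 / umax :=
      hratio.eventually_lt_const (div_pos (hu i0) humax_pos)
    have hev2 : ∀ᶠ k : ℕ in Filter.atTop, 1 ≤ k := Filter.eventually_ge_atTop 1
    filter_upwards [hev1, hev2] with k hk1 hk2
    have hk0 : (k : ℝ) ≠ 0 := Nat.cast_ne_zero.mpr (by omega)
    have htk : t ^ k ≤ ‖Bc ^ k‖ := by
      have e : (t / s) ^ k * s ^ k = t ^ k := by
        rw [← mul_pow, div_mul_cancel₀ _ hspos.ne']
      have h5 : (t / s) ^ k * s ^ k ≤ (u i0 / umax) * s ^ k :=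
        mul_le_mul_of_nonneg_right hk1.le (pow_nonneg hs k)
      calc t ^ k = (t / s) ^ k * s ^ k := e.symm
        _ ≤ (u i0 / umax) * s ^ k := h5
        _ = s ^ k * (u i0 / umax) := mul_comm _ _
        _ ≤ ‖Bc ^ k‖ := hnorm k
    have h6 : ENNReal.ofReal (t ^ k) ≤ (‖Bc ^ k‖₊ : ℝ≥0∞) := by
      rw [← enorm_eq_nnnorm, ← ofReal_norm]
      exact ENNReal.ofReal_le_ofReal htk
    have h7 := ENNReal.rpow_le_rpow h6 (by positivity : (0 : ℝ) ≤ 1 / (k : ℝ))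
    calc ENNReal.ofReal t = (ENNReal.ofReal (t ^ k)) ^ (1 / (k : ℝ)) := by
          rw [ENNReal.ofReal_pow ht0, ← ENNReal.rpow_natCast, ← ENNReal.rpow_mul,
            mul_one_div_cancel hk0, ENNReal.rpow_one]
      _ ≤ _ := h7
  have hfinal := ge_of_tendsto hgel hev
  have hle2 : ENNReal.ofReal t ≤ ENNReal.ofReal (specRad B) := hfinal.trans hsrle
  rw [ENNReal.ofReal_le_ofReal_iff hq0] at hle2
  linarith
theorem stmt_17 {n : ℕ} (hn : 2 ≤ n) (𝒟 : Matrix (Fin n) (Fin n) ℝ)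
    (hdiag : ∀ i, 𝒟 i i = 0) (hpos : ∀ i j, i ≠ j → 0 < 𝒟 i j)
    (D T : Fin n → ℝ)
    (hD : ∀ i, D i = ∑ j, 𝒟 i j)
    (hT : ∀ i, T i = ∑ j, 𝒟 i j * D j)
    (H : Fin n → Fin n → ℝ)
    (hH : ∀ i j, H i j =
      (D i + D j + Real.sqrt ((D i - D j) ^ 2 + 4 * T i * T j / (D i * D j))) / 2) :
    (sInf {x | ∃ i j, x = H i j} ≤ specRad (Matrix.diagonal D + 𝒟) ∧
      specRad (Matrix.diagonal D + 𝒟) ≤ sSup {x | ∃ i j, x = H i j}) ∧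
    ((specRad (Matrix.diagonal D + 𝒟) = sInf {x | ∃ i j, x = H i j} ∨
      specRad (Matrix.diagonal D + 𝒟) = sSup {x | ∃ i j, x = H i j}) ↔
      ∀ i j, D i + T i / D i = D j + T j / D j) := by
  have hn0 : 0 < n := by omega
  haveI hnemp : Nonempty (Fin n) := Fin.pos_iff_nonempty.mp hn0
  haveI : Inhabited (Fin n) := ⟨⟨0, by omega⟩⟩
  haveI : Nontrivial (Fin n) :=
    ⟨⟨⟨0, by omega⟩, ⟨1, by omega⟩, by simp [Fin.ext_iff]⟩⟩
  set Q := Matrix.diagonal D + 𝒟 with hQdef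
  set q := specRad Q with hqdef
  -- positivity facts
  have hDnn : ∀ i k, 0 ≤ 𝒟 i k := by
    intro i k
    rcases eq_or_ne i k with rfl | hik
    · rw [hdiag]
    · exact (hpos i k hik).le
  have hDpos : ∀ i, 0 < D i := by
    intro i
    obtain ⟨j, hj⟩ := exists_ne i
    rw [hD i]
    exact Finset.sum_pos' (fun k _ => hDnn i k)
      ⟨j, Finset.mem_univ j, hpos i j (Ne.symm hj)⟩
  have hTpos : ∀ i, 0 < T i := by
    intro i
    obtain ⟨j, hj⟩ := exists_ne i
    rw [hT i]
    exact Finset.sum_pos' (fun k _ => mul_nonneg (hDnn i k) (hDpos k).le)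
      ⟨j, Finset.mem_univ j, mul_pos (hpos i j (Ne.symm hj)) (hDpos j)⟩
  have hQpos : ∀ i j, 0 < Q i j := by
    intro i j
    rcases eq_or_ne i j with rfl | hij
    · have : Q i i = D i + 𝒟 i i := by
        simp [hQdef, Matrix.add_apply, Matrix.diagonal_apply_eq]
      rw [this, hdiag i, add_zero]
      exact hDpos i
    · have : Q i j = 𝒟 i j := by
        simp [hQdef, Matrix.add_apply, Matrix.diagonal_apply_ne _ hij]
      rw [this]
      exact hpos i j hij
  set c : Fin n → ℝ := fun i => D i + T i / D i with hc
  have hcpos : ∀ i, 0 < c i := fun i => add_pos (hDpos i) (div_pos (hTpos i) (hDpos i))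
  have hcD : ∀ i, D i < c i := fun i => lt_add_of_pos_right _ (div_pos (hTpos i) (hDpos i))
  have hrow : ∀ i, ∑ j, Q i j * D j = c i * D i := by
    intro i
    have h1 : ∀ j, Q i j * D j = (if i = j then D i * D j else 0) + 𝒟 i j * D j := by
      intro j
      rcases eq_or_ne i j with rfl | hij
      · rw [if_pos rfl]
        have e : Q i i = D i + 𝒟 i i := by simp [hQdef, Matrix.add_apply]
        rw [e, hdiag i]
        ring
      · rw [if_neg hij, zero_add]
        have e : Q i j = 𝒟 i j := by
          simp [hQdef, Matrix.add_apply, Matrix.diagonal_apply_ne _ hij]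
        rw [e]
    rw [Finset.sum_congr rfl fun j _ => h1 j, Finset.sum_add_distrib]
    rw [Finset.sum_ite_eq Finset.univ i (fun j => D i * D j)]
    simp only [Finset.mem_univ, if_true]
    rw [← hT i]
    have e2 : c i * D i = D i * D i + T i := by
      rw [hc]
      field_simp [(hDpos i).ne']
    rw [e2]
  -- fraction rewrite
  have hfrac : ∀ i j, 4 * T i * T j / (D i * D j) = 4 * (T i / D i) * (T j / D j) := by
    intro i j
    field_simp [(hDpos i).ne', (hDpos j).ne']
  -- H diagonal
  have hHd : ∀ i, H i i = c i := by
    intro i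
    have e1 : (D i - D i) ^ 2 + 4 * T i * T i / (D i * D i) = (2 * (T i / D i)) ^ 2 := by
      rw [hfrac]
      ring
    rw [hH i i, e1, Real.sqrt_sq (by have h1 := hTpos i; have h2 := hDpos i; positivity)]
    rw [hc]
    ring
  -- H bounded by max of diagonal values
  have hHle : ∀ i j, H i j ≤ max (c i) (c j) := by
    intro i j
    set M := max (c i) (c j) with hM
    have hMi : T i / D i ≤ M - D i := by
      have : c i ≤ M := le_max_left _ _
      rw [hc] at this
      simp only at this
      linarith
    have hMj : T j / D j ≤ M - D j := by
      have : c j ≤ M := le_max_right _ _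
      rw [hc] at this
      simp only at this
      linarith
    have hMip : 0 < M - D i := lt_of_lt_of_le (div_pos (hTpos i) (hDpos i)) hMi
    have hMjp : 0 < M - D j := lt_of_lt_of_le (div_pos (hTpos j) (hDpos j)) hMj
    have hsq : (D i - D j) ^ 2 + 4 * T i * T j / (D i * D j) ≤ (2 * M - D i - D j) ^ 2 := by
      rw [hfrac]
      have h2 : 4 * (T i / D i) * (T j / D j) ≤ 4 * (M - D i) * (M - D j) := by
        have := mul_le_mul hMi hMj (div_pos (hTpos j) (hDpos j)).le hMip.le
        nlinarith
      nlinarith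
    have hsqrt : Real.sqrt ((D i - D j) ^ 2 + 4 * T i * T j / (D i * D j))
        ≤ 2 * M - D i - D j := by
      calc Real.sqrt ((D i - D j) ^ 2 + 4 * T i * T j / (D i * D j))
          ≤ Real.sqrt ((2 * M - D i - D j) ^ 2) := Real.sqrt_le_sqrt hsq
        _ = 2 * M - D i - D j := Real.sqrt_sq (by linarith)
    rw [hH i j]
    linarith
  -- H bounded below by min of diagonal values
  have hHge : ∀ i j, min (c i) (c j) ≤ H i j := by
    intro i j
    set m := min (c i) (c j) with hm
    have hsqrt0 : 0 ≤ Real.sqrt ((D i - D j) ^ 2 + 4 * T i * T j / (D i * D j)) :=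
      Real.sqrt_nonneg _
    rcases le_or_gt (2 * m - D i - D j) 0 with hneg | hposm
    · rw [hH i j]
      linarith
    · have hsq : (2 * m - D i - D j) ^ 2 ≤ (D i - D j) ^ 2 + 4 * T i * T j / (D i * D j) := by
        rw [hfrac]
        have key : 4 * (m - D i) * (m - D j) ≤ 4 * (T i / D i) * (T j / D j) := by
          have hTi : 0 < T i / D i := div_pos (hTpos i) (hDpos i)
          have hTj : 0 < T j / D j := div_pos (hTpos j) (hDpos j)
          rcases min_cases (c i) (c j) with ⟨he, -⟩ | ⟨he, -⟩
          · -- m = c i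
            have h1 : m - D i = T i / D i := by rw [hm, he, hc]; simp only; ring
            have h2 : m - D j ≤ T j / D j := by
              have : m ≤ c j := hm ▸ min_le_right _ _
              rw [hc] at this
              simp only at this
              linarith
            rcases le_or_gt (m - D j) 0 with h3 | h3
            · nlinarith
            · nlinarith
          · -- m = c j
            have h1 : m - D j = T j / D j := by rw [hm, he, hc]; simp only; ring
            have h2 : m - D i ≤ T i / D i := by
              have : m ≤ c i := hm ▸ min_le_left _ _
              rw [hc] at this
              simp only at this
              linarith
            rcases le_or_gt (m - D i) 0 with h3 | h3
            · nlinarith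
            · nlinarith
        nlinarith
      have hsqrt : 2 * m - D i - D j
          ≤ Real.sqrt ((D i - D j) ^ 2 + 4 * T i * T j / (D i * D j)) := by
        calc 2 * m - D i - D j = Real.sqrt ((2 * m - D i - D j) ^ 2) :=
              (Real.sqrt_sq hposm.le).symm
          _ ≤ _ := Real.sqrt_le_sqrt hsq
      rw [hH i j]
      linarith
    -- the set S
  set S : Set ℝ := {x | ∃ i j, x = H i j} with hS
  have hSfin : S.Finite := by
    have e : S = Set.range (fun p : Fin n × Fin n => H p.1 p.2) := by
      ext x
      constructor
      · rintro ⟨i, j, rfl⟩; exact ⟨(i, j), rfl⟩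
      · rintro ⟨⟨i, j⟩, rfl⟩; exact ⟨i, j, rfl⟩
    rw [e]; exact Set.finite_range _
  have hmemS : ∀ i j, H i j ∈ S := fun i j => ⟨i, j, rfl⟩
  have hSne : S.Nonempty := ⟨H default default, hmemS _ _⟩
  have hleSup : ∀ i j, H i j ≤ sSup S := fun i j => le_csSup hSfin.bddAbove (hmemS i j)
  have hInfle : ∀ i j, sInf S ≤ H i j := fun i j => csInf_le hSfin.bddBelow (hmemS i j)
  have hc_le : ∀ i, c i ≤ sSup S := fun i => (hHd i) ▸ hleSup i i
  have hle_c : ∀ i, sInf S ≤ c i := fun i => (hHd i) ▸ hInfle i i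
  have hInfpos : 0 < sInf S := by
    obtain ⟨a, b, hab⟩ := hSne.csInf_mem hSfin
    rw [hab]
    exact lt_of_lt_of_le (lt_min (hcpos a) (hcpos b)) (hHge a b)
  -- eigen pair
  obtain ⟨μ, v, hμabs, hv0, heig⟩ := specRad_exists_eigen hn0 Q
  have habs : ∀ k, q * ‖v k‖ ≤ ∑ j, Q k j * ‖v j‖ := by
    intro k
    have h1 : μ * v k = ∑ j, (Q k j : ℂ) * v j := by
      have h2 := congrFun heig k
      rw [Matrix.mulVec, dotProduct] at h2
      simp only [Matrix.map_apply, Pi.smul_apply, smul_eq_mul] at h2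
      exact h2.symm
    calc q * ‖v k‖ = ‖μ‖ * ‖v k‖ := by rw [hμabs, hqdef]
      _ = ‖μ * v k‖ := (norm_mul μ (v k)).symm
      _ = ‖∑ j, (Q k j : ℂ) * v j‖ := by rw [h1]
      _ ≤ ∑ j, ‖(Q k j : ℂ) * v j‖ := norm_sum_le _ _
      _ = ∑ j, Q k j * ‖v j‖ := by
          refine Finset.sum_congr rfl fun j _ => ?_
          rw [norm_mul, Complex.norm_real, Real.norm_eq_abs, abs_of_nonneg (hQpos k j).le]
  set a : Fin n → ℝ := fun k => ‖v k‖ with ha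
  have ha0 : ∀ k, 0 ≤ a k := fun k => norm_nonneg _
  set f : Fin n → ℝ := fun k => a k / D k with hf
  obtain ⟨i, -, hi⟩ := Finset.exists_max_image Finset.univ f Finset.univ_nonempty
  have hfi : 0 < f i := by
    obtain ⟨j0, hj0⟩ := Function.ne_iff.mp hv0
    have : 0 < f j0 := div_pos (norm_pos_iff.mpr hj0) (hDpos j0)
    exact lt_of_lt_of_le this (hi j0 (Finset.mem_univ j0))
  have haD : ∀ j, a j = f j * D j := fun j => (div_mul_cancel₀ _ (hDpos j).ne').symm
  have hrowb : ∀ k, q * a k ≤ f i * (c k * D k) := by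
    intro k
    calc q * a k ≤ ∑ j, Q k j * a j := habs k
      _ ≤ ∑ j, Q k j * (f i * D j) := by
          refine Finset.sum_le_sum fun j _ => ?_
          rw [haD j]
          exact mul_le_mul_of_nonneg_left
            (mul_le_mul_of_nonneg_right (hi j (Finset.mem_univ j)) (hDpos j).le)
            (hQpos k j).le
      _ = f i * ∑ j, Q k j * D j := by
          rw [Finset.mul_sum]
          exact Finset.sum_congr rfl fun j _ => by ring
      _ = f i * (c k * D k) := by rw [hrow k]
  have hqci : q ≤ c i := by
    have h2 := hrowb i
    rw [haD i] at h2
    have h3 : 0 < f i * D i := mul_pos hfi (hDpos i)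
    have h4 : f i * (c i * D i) = c i * (f i * D i) := by ring
    exact le_of_mul_le_mul_right (by linarith) h3
  -- the two bounds
  have hub : q ≤ sSup S := hqci.trans (hc_le i)
  have hlb : sInf S ≤ q := by
    refine specRad_ge hn0 Q (fun i' j' => (hQpos i' j').le) D hDpos (sInf S) hInfpos.le ?_
    intro k
    rw [hrow k]
    exact mul_le_mul_of_nonneg_right (hle_c k) (hDpos k).le
  refine ⟨⟨hlb, hub⟩, ?_⟩
  constructor
  · rintro (hqe | hqe)
    · -- q = sInf S : min case
      by_contra hcon
      push_neg at hcon
      obtain ⟨i1, j1, hij1⟩ := hcon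
      have hcon' : ∃ k, sInf S < c k := by
        by_contra hk
        push_neg at hk
        have hall : ∀ k, c k = sInf S := fun k => le_antisymm (hk k) (hle_c k)
        have : c i1 = c j1 := (hall i1).trans (hall j1).symm
        rw [hc] at this
        simp only at this
        exact hij1 this
      obtain ⟨k, hk⟩ := hcon'
      set m := sInf S with hm
      set qk := Finset.univ.inf' Finset.univ_nonempty (fun i' => Q i' k) with hqk
      have hqkpos : 0 < qk := by
        rw [hqk, Finset.lt_inf'_iff]
        exact fun i' _ => hQpos i' k
      have hqkle : ∀ i', qk ≤ Q i' k := fun i' => Finset.inf'_le _ (Finset.mem_univ i')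
      set Dmax := Finset.univ.sup' Finset.univ_nonempty D with hDm
      have hDmax : ∀ j', D j' ≤ Dmax := fun j' => Finset.le_sup' D (Finset.mem_univ j')
      have hDmaxpos : 0 < Dmax := lt_of_lt_of_le (hDpos k) (hDmax k)
      set δ := qk * ((c k - m) * D k) with hδ
      have hδpos : 0 < δ := by
        apply mul_pos hqkpos
        apply mul_pos _ (hDpos k)
        linarith
      have hrow2 : ∀ i', m ^ 2 * D i' + δ ≤ ∑ j', (Q * Q) i' j' * D j' := by
        intro i'
        have hswap : ∑ j', (Q * Q) i' j' * D j' = ∑ l, Q i' l * (c l * D l) := by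
          simp only [Matrix.mul_apply, Finset.sum_mul]
          rw [Finset.sum_comm]
          refine Finset.sum_congr rfl fun l _ => ?_
          calc ∑ j', Q i' l * Q l j' * D j' = Q i' l * ∑ j', Q l j' * D j' := by
                rw [Finset.mul_sum]
                exact Finset.sum_congr rfl fun j' _ => by ring
            _ = Q i' l * (c l * D l) := by rw [hrow l]
        rw [hswap]
        have hsub : ∑ l, Q i' l * (c l * D l) - ∑ l, Q i' l * (m * D l)
            = ∑ l, Q i' l * ((c l - m) * D l) := by
          rw [← Finset.sum_sub_distrib]
          exact Finset.sum_congr rfl fun l _ => by ring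
        have h2 : Q i' k * ((c k - m) * D k) ≤ ∑ l, Q i' l * ((c l - m) * D l) := by
          refine Finset.single_le_sum (f := fun l => Q i' l * ((c l - m) * D l)) ?_
            (Finset.mem_univ k)
          intro l _
          have : m ≤ c l := hle_c l
          have := hDpos l
          have := hQpos i' l
          exact mul_nonneg (hQpos i' l).le (mul_nonneg (by linarith) (hDpos l).le)
        have h3 : ∑ l, Q i' l * (m * D l) = m * (c i' * D i') := by
          rw [← hrow i', Finset.mul_sum]
          exact Finset.sum_congr rfl fun l _ => by ring
        have h4 : m * (m * D i') ≤ m * (c i' * D i') :=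
          mul_le_mul_of_nonneg_left
            (mul_le_mul_of_nonneg_right (hle_c i') (hDpos i').le) hInfpos.le
        have h5 : δ ≤ Q i' k * ((c k - m) * D k) := by
          apply mul_le_mul_of_nonneg_right (hqkle i')
          have := hDpos k
          exact mul_nonneg (by linarith) (hDpos k).le
        have h6 : m ^ 2 * D i' = m * (m * D i') := by ring
        linarith
      set s' := m ^ 2 + δ / Dmax with hs'
      have hs'le : ∀ i', s' * D i' ≤ ∑ j', (Q * Q) i' j' * D j' := by
        intro i'
        have h6 : δ / Dmax * D i' ≤ δ := by
          rw [div_mul_eq_mul_div, div_le_iff₀ hDmaxpos]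
          exact mul_le_mul_of_nonneg_left (hDmax i') hδpos.le
        have h7 := hrow2 i'
        have h8 : s' * D i' = m ^ 2 * D i' + δ / Dmax * D i' := by rw [hs']; ring
        rw [h8]
        linarith [h6, h7]
      have hQQnn : ∀ i' j', 0 ≤ (Q * Q) i' j' := by
        intro i' j'
        rw [Matrix.mul_apply]
        exact Finset.sum_nonneg fun l _ => mul_nonneg (hQpos i' l).le (hQpos l j').le
      have hs'nn : 0 ≤ s' := by
        rw [hs']
        have : 0 ≤ δ / Dmax := div_nonneg hδpos.le hDmaxpos.le
        have := sq_nonneg m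
        linarith
      have hlb2 : s' ≤ specRad (Q * Q) := specRad_ge hn0 (Q * Q) hQQnn D hDpos s' hs'nn hs'le
      have hub2 : specRad (Q * Q) ≤ q ^ 2 := specRad_mul_self_le hn0 Q
      have hq2 : q ^ 2 = m ^ 2 := by rw [hqe]
      have hδD : 0 < δ / Dmax := div_pos hδpos hDmaxpos
      rw [hs'] at hlb2
      linarith
    · -- q = sSup S : max case
      have hciq : c i = q := le_antisymm (hqe ▸ hc_le i) hqci
      have hqpos : 0 < q := hciq ▸ hcpos i
      have hfall : ∀ j', f j' = f i := by
        intro j'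
        by_contra hjne
        have hjlt : f j' < f i := lt_of_le_of_ne (hi j' (Finset.mem_univ j')) hjne
        have hstrict : ∑ l, Q i l * a l < f i * (c i * D i) := by
          have h9 : ∑ l, Q i l * a l < ∑ l, Q i l * (f i * D l) := by
            refine Finset.sum_lt_sum (fun l _ => ?_) ⟨j', Finset.mem_univ j', ?_⟩
            · rw [haD l]
              exact mul_le_mul_of_nonneg_left
                (mul_le_mul_of_nonneg_right (hi l (Finset.mem_univ l)) (hDpos l).le)
                (hQpos i l).le
            · rw [haD j']
              exact mul_lt_mul_of_pos_left
                (mul_lt_mul_of_pos_right hjlt (hDpos j')) (hQpos i j')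
          have h10 : ∑ l, Q i l * (f i * D l) = f i * (c i * D i) := by
            rw [← hrow i, Finset.mul_sum]
            exact Finset.sum_congr rfl fun l _ => by ring
          linarith
        have h11 := habs i
        have h12 : q * a i = f i * (c i * D i) := by
          rw [haD i, hciq]
          ring
        linarith
      have hcall : ∀ k, c k = q := by
        intro k
        refine le_antisymm (hqe ▸ hc_le k) ?_
        have h13 := hrowb k
        rw [haD k, hfall k] at h13
        have h14 : 0 < f i * D k := mul_pos hfi (hDpos k)
        have h15 : f i * (c k * D k) = c k * (f i * D k) := by ring
        exact le_of_mul_le_mul_right (by linarith) h14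
      intro i' j'
      have := (hcall i').trans (hcall j').symm
      rw [hc] at this
      simpa using this
  · -- constant implies equality
    intro hconst
    have hconst' : ∀ i' j', c i' = c j' := by
      intro i' j'
      rw [hc]
      simpa using hconst i' j'
    have hTeq : ∀ k, T k = (c k - D k) * D k := by
      intro k
      rw [hc]
      simp only
      field_simp
      rw [add_sub_cancel_left, mul_div_right_comm, div_self (hDpos k).ne', one_mul]
    have hHc : ∀ i' j', H i' j' = c i' := by
      intro i' j'
      have hcc : c j' = c i' := hconst' j' i'
      have hinner : (D i' - D j') ^ 2 + 4 * T i' * T j' / (D i' * D j')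
          = (2 * c i' - D i' - D j') ^ 2 := by
        rw [hfrac, hTeq i', hTeq j', hcc]
        field_simp [(hDpos i').ne', (hDpos j').ne']
        ring
      have hcDi : D i' < c i' := hcD i'
      have hcDj : D j' < c j' := hcD j'
      rw [hcc] at hcDj
      rw [hH i' j', hinner, Real.sqrt_sq (by linarith)]
      ring
    have hSsing : S = {c default} := by
      ext x
      simp only [hS, Set.mem_setOf_eq, Set.mem_singleton_iff]
      constructor
      · rintro ⟨i', j', rfl⟩
        rw [hHc i' j']
        exact hconst' i' default
      · rintro rfl
        exact ⟨default, default, (hHc default default).symm⟩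
    have h15 : sInf S = c default := by rw [hSsing, csInf_singleton]
    have h16 : sSup S = c default := by rw [hSsing, csSup_singleton]
    left
    rw [h15]
    refine le_antisymm ?_ ?_
    · rw [← h16]; exact hub
    · rw [← h15]; exact hlb
end
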